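/- arXiv:2106.08414 — 9 statements merged into one kernel-verified Lean document; each statement's English description precedes it below -/
import Mathlib

section
/- Let (Ω, ℙ) be a probability space, d ∈ ℕ, γ ∈ (0,1), U_R ≥ 0 and C_Y ≥ 0. Let T : Ω → ℕ be a random variable with ℙ(T = t) = (1 − γ^{1/2})·γ^{t/2} for every t ∈ ℕ. Let (R_t)_{t∈ℕ} be real-valued random variables with |R_t| ≤ U_R almost surely for every t, and let (Y_t)_{t∈ℕ} be ℝ^d-valued random vectors with 𝔼‖Y_t‖ ≤ C_Y for every t. Assume T is independent of the σ-algebra generated by the full sequence ((R_t)_{t∈ℕ}, (Y_t)_{t∈ℕ}). Then: (i) the random vector ĝ := Σ_{t=0}^{T} γ^{t/2} R_t (Σ_{τ=0}^{t} Y_τ) is integrable; (ii) for each τ ∈ ℕ the series Q_τ := Σ_{t=τ}^{∞} γ^{t−τ} R_t converges absolutely almost surely with |Q_τ| ≤ U_R/(1−γ); (iii) the series Σ_{τ=0}^{∞} γ^{τ} 𝔼[Q_τ · Y_τ] converges absolutely; and (iv) 𝔼[ĝ] = Σ_{τ=0}^{∞} γ^{τ} 𝔼[Q_τ · Y_τ].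 -/
/-!
Write the estimator as `ĝ = ∑ₜ 1{t ≤ T} gₜ` with `gₜ = γ^{t/2} Rₜ ∑_{τ ≤ t} Y_τ`. Since `T` is
independent of `gₜ`, `𝔼[1{t ≤ T} gₜ] = ℙ(T ≥ t) 𝔼[gₜ] = γ^{t/2} 𝔼[gₜ]`, and the two factors
`γ^{t/2}` combine to `γ^t`; the bound `𝔼‖gₜ‖ ≤ γ^{t/2} (t + 1) U_R C_Y` makes this exchange of sum
and expectation legitimate and gives integrability. The double series
`∑ₜ ∑_{τ ≤ t} γ^t 𝔼[Rₜ Y_τ]` has terms bounded by `γ^t U_R C_Y`, so it converges absolutely and can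
be re-summed along `t = τ + n`; summing over `n` inside the expectation produces `γ^τ 𝔼[Q_τ Y_τ]`.
-/

open MeasureTheory ProbabilityTheory Finset

theorem Summable.tsum_eq_tsum_sum_antidiagonal {E : Type*} [AddCommMonoid E] [TopologicalSpace E]
    [ContinuousAdd E] [T3Space E] {f : ℕ × ℕ → E} (hf : Summable f) :
    ∑' p, f p = ∑' n, ∑ p ∈ antidiagonal n, f p := by
  conv_rhs => congr; ext; rw [← Finset.sum_finset_coe, ← tsum_fintype (L := .unconditional _)]
  rw [← HasAntidiagonal.sigmaAntidiagonalEquivProd.tsum_eq f]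
  exact (HasAntidiagonal.sigmaAntidiagonalEquivProd.summable_iff.mpr hf).tsum_sigma'
    fun n => (hasSum_fintype _).summable

section GeometricWeights

variable {q U : ℝ} {r : ℕ → ℝ}

theorem abs_pow_mul_le {x : ℝ} (hq : 0 ≤ q) (hx : |x| ≤ U) (n : ℕ) :
    |q ^ n * x| ≤ q ^ n * U := by
  rw [abs_mul, abs_of_nonneg (pow_nonneg hq n)]
  exact mul_le_mul_of_nonneg_left hx (pow_nonneg hq n)

theorem summable_abs_pow_mul (hq0 : 0 ≤ q) (hq1 : q < 1) (hr : ∀ n, |r n| ≤ U) :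
    Summable fun n => |q ^ n * r n| :=
  .of_nonneg_of_le (fun _ => abs_nonneg _) (fun n => abs_pow_mul_le hq0 (hr n) n)
    ((summable_geometric_of_lt_one hq0 hq1).mul_right U)

theorem abs_tsum_pow_mul_le (hq0 : 0 ≤ q) (hq1 : q < 1) (hr : ∀ n, |r n| ≤ U) :
    |∑' n, q ^ n * r n| ≤ U / (1 - q) :=
  calc |∑' n, q ^ n * r n| ≤ ∑' n, |q ^ n * r n| := by
        simpa only [Real.norm_eq_abs] using
          norm_tsum_le_tsum_norm (f := fun n => q ^ n * r n) (summable_abs_pow_mul hq0 hq1 hr)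
    _ ≤ ∑' n, q ^ n * U :=
        (summable_abs_pow_mul hq0 hq1 hr).tsum_le_tsum (fun n => abs_pow_mul_le hq0 (hr n) n)
          ((summable_geometric_of_lt_one hq0 hq1).mul_right U)
    _ = U / (1 - q) := by
        rw [tsum_mul_right, tsum_geometric_of_lt_one hq0 hq1, inv_mul_eq_div]

end GeometricWeights

section Integration

variable {Ω E : Type*} {mΩ : MeasurableSpace Ω} {μ : Measure Ω} [NormedAddCommGroup E]

theorem integrable_of_enorm_le_tsum {ι : Type*} [Countable ι] {F : ι → Ω → E} {g : Ω → E}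
    (hg : AEStronglyMeasurable g μ) (hF : ∀ i, Integrable (F i) μ)
    (hsum : Summable fun i => ∫ ω, ‖F i ω‖ ∂μ) (hle : ∀ᵐ ω ∂μ, ‖g ω‖ₑ ≤ ∑' i, ‖F i ω‖ₑ) :
    Integrable g μ := by
  refine ⟨hg, ?_⟩
  calc ∫⁻ ω, ‖g ω‖ₑ ∂μ ≤ ∫⁻ ω, ∑' i, ‖F i ω‖ₑ ∂μ := lintegral_mono_ae hle
    _ = ∑' i, ∫⁻ ω, ‖F i ω‖ₑ ∂μ := lintegral_tsum fun i => (hF i).aestronglyMeasurable.enorm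
    _ = ∑' i, ENNReal.ofReal (∫ ω, ‖F i ω‖ ∂μ) :=
        tsum_congr fun i => (ofReal_integral_norm_eq_lintegral_enorm (hF i)).symm
    _ = ENNReal.ofReal (∑' i, ∫ ω, ‖F i ω‖ ∂μ) :=
        (ENNReal.ofReal_tsum_of_nonneg (fun _ => integral_nonneg fun _ => norm_nonneg _) hsum).symm
    _ < ⊤ := ENNReal.ofReal_lt_top

variable [NormedSpace ℝ E]

theorem integral_norm_smul_le_of_ae_abs_le {r : Ω → ℝ} {y : Ω → E} {U : ℝ}
    (hr : ∀ᵐ ω ∂μ, |r ω| ≤ U) (hy : Integrable y μ) :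
    ∫ ω, ‖r ω • y ω‖ ∂μ ≤ U * ∫ ω, ‖y ω‖ ∂μ := by
  rw [← integral_const_mul]
  refine integral_mono_of_nonneg (ae_of_all _ fun _ => norm_nonneg _) (hy.norm.const_mul U) ?_
  filter_upwards [hr] with ω hω
  rw [norm_smul, Real.norm_eq_abs]
  exact mul_le_mul_of_nonneg_right hω (norm_nonneg _)

theorem integral_tsum_smul_of_ae_abs_le [CompleteSpace E] {r : ℕ → Ω → ℝ} {y : Ω → E}
    {c : ℕ → ℝ} (hr : ∀ n, AEStronglyMeasurable (r n) μ) (hrc : ∀ n, ∀ᵐ ω ∂μ, |r n ω| ≤ c n)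
    (hc : Summable c) (hy : Integrable y μ) :
    ∫ ω, (∑' n, r n ω) • y ω ∂μ = ∑' n, ∫ ω, r n ω • y ω ∂μ := by
  have hsummable : ∀ᵐ ω ∂μ, Summable fun n => r n ω := by
    filter_upwards [ae_all_iff.2 hrc] with ω hω
    exact hc.of_norm_bounded hω
  rw [integral_tsum_of_summable_integral_norm (F := fun n ω => r n ω • y ω)
    (fun n => hy.bdd_smul (c n) (hr n) (hrc n))
    (.of_nonneg_of_le (fun _ => integral_nonneg fun _ => norm_nonneg _)
      (fun n => integral_norm_smul_le_of_ae_abs_le (hrc n) hy) (hc.mul_right _))]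
  refine integral_congr_ae ?_
  filter_upwards [hsummable] with ω hω
  exact (hω.tsum_smul_const _).symm

theorem IndepFun.integral_indicator_preimage [MeasurableSpace E] [BorelSpace E]
    {α : Type*} [MeasurableSpace α] {T : Ω → α} {X : Ω → E} (h : IndepFun T X μ)
    (hT : Measurable T) (hX : AEStronglyMeasurable X μ) {s : Set α} (hs : MeasurableSet s) :
    ∫ ω, (T ⁻¹' s).indicator X ω ∂μ = μ.real (T ⁻¹' s) • ∫ ω, X ω ∂μ := by
  have hind : IndepFun (fun ω => s.indicator (1 : α → ℝ) (T ω)) X μ :=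
    h.comp (measurable_one.indicator hs) measurable_id
  calc ∫ ω, (T ⁻¹' s).indicator X ω ∂μ = ∫ ω, s.indicator (1 : α → ℝ) (T ω) • X ω ∂μ := by
        congr with ω
        by_cases hω : T ω ∈ s <;> simp [hω]
    _ = (∫ ω, s.indicator (1 : α → ℝ) (T ω) ∂μ) • ∫ ω, X ω ∂μ :=
        hind.integral_fun_smul_eq_smul_integral
          ((measurable_one.indicator hs).comp hT).aestronglyMeasurable hX
    _ = μ.real (T ⁻¹' s) • ∫ ω, X ω ∂μ := by
        rw [← integral_indicator_one (hT hs)]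
        rfl

end Integration

theorem indepFun_of_indep_comap {Ω β E : Type*} {mΩ : MeasurableSpace Ω} {μ : Measure Ω}
    [MeasurableSpace β] [MeasurableSpace E] {m : MeasurableSpace Ω} {T : Ω → β} {X : Ω → E}
    (h : Indep (MeasurableSpace.comap T inferInstance) m μ) (hX : Measurable[m] X) :
    IndepFun T X μ :=
  (IndepFun_iff_Indep T X μ).2 (indep_of_indep_of_le_right h hX.comap_le)

theorem measureReal_setOf_le_eq_pow_of_geometric {Ω : Type*} {mΩ : MeasurableSpace Ω}
    {μ : Measure Ω} [IsProbabilityMeasure μ] {T : Ω → ℕ} (hT : Measurable T) {q : ℝ}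
    (hq0 : 0 ≤ q) (hq1 : q ≤ 1)
    (hgeom : ∀ t, μ {ω | T ω = t} = ENNReal.ofReal ((1 - q) * q ^ t)) (t : ℕ) :
    μ.real {ω | t ≤ T ω} = q ^ t := by
  induction t with
  | zero => simp
  | succ t ih =>
    have hsplit : {ω | t ≤ T ω} = {ω | T ω = t} ∪ {ω | t + 1 ≤ T ω} := by
      ext ω
      simp only [Set.mem_ofPred_eq, Set.mem_union]
      omega
    have hdisj : Disjoint {ω | T ω = t} {ω | t + 1 ≤ T ω} :=
      Set.disjoint_left.2 fun ω h1 h2 => by simp only [Set.mem_ofPred_eq] at h1 h2; omega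
    have hatom : μ.real {ω | T ω = t} = (1 - q) * q ^ t := by
      rw [measureReal_def, hgeom, ENNReal.toReal_ofReal (by have := pow_nonneg hq0 t; nlinarith)]
    rw [hsplit, measureReal_union hdisj (measurableSet_le measurable_const hT), hatom] at ih
    rw [pow_succ]
    linarith

theorem sum_range_succ_eq_tsum_indicator {Ω M : Type*} [AddCommMonoid M] [TopologicalSpace M]
    {T : Ω → ℕ} {X : ℕ → Ω → M} (ω : Ω) :
    ∑ t ∈ range (T ω + 1), X t ω = ∑' t, {ω | t ≤ T ω}.indicator (X t) ω := by
  rw [tsum_eq_sum (s := range (T ω + 1))]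
  · refine sum_congr rfl fun t ht => ?_
    rw [Set.indicator_of_mem (s := {ω | t ≤ T ω}) (Nat.lt_succ_iff.1 (mem_range.1 ht))]
  · intro t ht
    exact Set.indicator_of_notMem (s := {ω | t ≤ T ω})
      (fun h => ht (mem_range.2 (Nat.lt_succ_of_le h))) _

section StoppedSum

variable {Ω E : Type*} {mΩ : MeasurableSpace Ω} {μ : Measure Ω} [NormedAddCommGroup E]
  [MeasurableSpace E] [BorelSpace E] {T : Ω → ℕ} {X : ℕ → Ω → E}

theorem integral_norm_indicator_eq_of_indepFun {t : ℕ} (hT : Measurable T)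
    (hX : Integrable (X t) μ) (hind : IndepFun T (X t) μ) :
    ∫ ω, ‖{ω | t ≤ T ω}.indicator (X t) ω‖ ∂μ = μ.real {ω | t ≤ T ω} * ∫ ω, ‖X t ω‖ ∂μ := by
  simp_rw [norm_indicator_eq_indicator_norm]
  exact IndepFun.integral_indicator_preimage (IndepFun.comp hind measurable_id measurable_norm) hT
    hX.norm.aestronglyMeasurable measurableSet_Ici

theorem integrable_sum_range_succ_of_indepFun [SecondCountableTopology E]
    (hT : Measurable T) (hX : ∀ t, Measurable (X t)) (hXi : ∀ t, Integrable (X t) μ)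
    (hind : ∀ t, IndepFun T (X t) μ)
    (hsum : Summable fun t => μ.real {ω | t ≤ T ω} * ∫ ω, ‖X t ω‖ ∂μ) :
    Integrable (fun ω => ∑ t ∈ range (T ω + 1), X t ω) μ := by
  have hmeas : Measurable fun ω => ∑ t ∈ range (T ω + 1), X t ω := by
    have h : Measurable fun p : Ω × ℕ => ∑ t ∈ range (p.2 + 1), X t p.1 :=
      measurable_from_prod_countable_left fun k =>
        Finset.measurable_sum (range (k + 1)) fun t _ => hX t
    exact h.comp (measurable_id.prodMk hT)
  refine integrable_of_enorm_le_tsum hmeas.aestronglyMeasurable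
    (fun t => (hXi t).indicator (hT measurableSet_Ici))
    (hsum.congr fun t => (integral_norm_indicator_eq_of_indepFun hT (hXi t) (hind t)).symm)
    (ae_of_all _ fun ω => ?_)
  rw [sum_range_succ_eq_tsum_indicator]
  exact enorm_tsum_le_tsum_enorm

variable [NormedSpace ℝ E]

theorem integral_sum_range_succ_of_indepFun
    (hT : Measurable T) (hXi : ∀ t, Integrable (X t) μ) (hind : ∀ t, IndepFun T (X t) μ)
    (hsum : Summable fun t => μ.real {ω | t ≤ T ω} * ∫ ω, ‖X t ω‖ ∂μ) :
    ∫ ω, ∑ t ∈ range (T ω + 1), X t ω ∂μ = ∑' t, μ.real {ω | t ≤ T ω} • ∫ ω, X t ω ∂μ := by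
  simp_rw [sum_range_succ_eq_tsum_indicator]
  rw [← integral_tsum_of_summable_integral_norm (F := fun t => {ω | t ≤ T ω}.indicator (X t))
    (fun t => (hXi t).indicator (hT measurableSet_Ici))
    (hsum.congr fun t => (integral_norm_indicator_eq_of_indepFun hT (hXi t) (hind t)).symm)]
  exact tsum_congr fun t =>
    IndepFun.integral_indicator_preimage (hind t) hT (hXi t).aestronglyMeasurable measurableSet_Ici

end StoppedSum

section PolicyGradient

variable {Ω E : Type*} {mΩ : MeasurableSpace Ω} {P : Measure Ω} [NormedAddCommGroup E]
  [NormedSpace ℝ E] {R : ℕ → Ω → ℝ} {Y : ℕ → Ω → E} {U C : ℝ}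

theorem integral_norm_smul_sum_range_le {r : Ω → ℝ} (hU : 0 ≤ U) (hr : ∀ᵐ ω ∂P, |r ω| ≤ U)
    (hY : ∀ τ, Integrable (Y τ) P) (hYC : ∀ τ, ∫ ω, ‖Y τ ω‖ ∂P ≤ C) (n : ℕ) :
    ∫ ω, ‖r ω • ∑ τ ∈ range n, Y τ ω‖ ∂P ≤ U * (n * C) := by
  refine (integral_norm_smul_le_of_ae_abs_le hr (integrable_finsetSum _ fun τ _ => hY τ)).trans
    (mul_le_mul_of_nonneg_left ?_ hU)
  calc ∫ ω, ‖∑ τ ∈ range n, Y τ ω‖ ∂P ≤ ∫ ω, ∑ τ ∈ range n, ‖Y τ ω‖ ∂P :=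
        integral_mono (integrable_finsetSum _ fun τ _ => hY τ).norm
          (integrable_finsetSum _ fun τ _ => (hY τ).norm) fun ω => norm_sum_le _ _
    _ = ∑ τ ∈ range n, ∫ ω, ‖Y τ ω‖ ∂P := integral_finsetSum _ fun τ _ => (hY τ).norm
    _ ≤ n * C := by simpa using sum_le_sum fun τ (_ : τ ∈ range n) => hYC τ

theorem summable_pow_mul_integral_norm_smul_sum_range {s : ℝ} (hs0 : 0 ≤ s) (hs1 : s < 1)
    (hU : 0 ≤ U) (hR : ∀ t, ∀ᵐ ω ∂P, |R t ω| ≤ U) (hY : ∀ τ, Integrable (Y τ) P)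
    (hYC : ∀ τ, ∫ ω, ‖Y τ ω‖ ∂P ≤ C) :
    Summable fun t : ℕ => s ^ t * ∫ ω, ‖(s ^ t * R t ω) • ∑ τ ∈ range (t + 1), Y τ ω‖ ∂P := by
  have hss : ‖s * s‖ < 1 := by
    rw [Real.norm_of_nonneg (mul_nonneg hs0 hs0)]
    nlinarith
  have hgeom : Summable fun t : ℕ => ((t : ℝ) + 1) * (s * s) ^ t :=
    ((summable_pow_mul_geometric_of_norm_lt_one 1 hss).add
      (summable_geometric_of_norm_lt_one hss)).congr fun t => by ring
  refine .of_nonneg_of_le (fun t => mul_nonneg (pow_nonneg hs0 t)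
    (integral_nonneg fun _ => norm_nonneg _)) (fun t => ?_) (hgeom.mul_right (U * C))
  calc s ^ t * ∫ ω, ‖(s ^ t * R t ω) • ∑ τ ∈ range (t + 1), Y τ ω‖ ∂P
      ≤ s ^ t * (s ^ t * U * ((t + 1 : ℕ) * C)) :=
        mul_le_mul_of_nonneg_left (integral_norm_smul_sum_range_le
          (mul_nonneg (pow_nonneg hs0 t) hU) ((hR t).mono fun ω hω => abs_pow_mul_le hs0 hω t)
          hY hYC (t + 1)) (pow_nonneg hs0 t)
    _ = ((t : ℝ) + 1) * (s * s) ^ t * (U * C) := by push_cast; ring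

theorem integral_mul_smul_sum_range (hR : ∀ t, Measurable (R t))
    (hRU : ∀ t, ∀ᵐ ω ∂P, |R t ω| ≤ U) (hY : ∀ τ, Integrable (Y τ) P) (c : ℝ) (t n : ℕ) :
    ∫ ω, (c * R t ω) • ∑ τ ∈ range n, Y τ ω ∂P = c • ∑ τ ∈ range n, ∫ ω, R t ω • Y τ ω ∂P := by
  have hpull : ∀ ω, (c * R t ω) • ∑ τ ∈ range n, Y τ ω = c • ∑ τ ∈ range n, R t ω • Y τ ω :=
    fun ω => by rw [mul_smul, smul_sum]
  simp_rw [hpull]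
  rw [integral_smul, integral_finsetSum (f := fun τ ω => R t ω • Y τ ω) _ fun τ _ =>
    (hY τ).bdd_smul U (hR t).aestronglyMeasurable (hRU t)]

theorem summable_norm_pow_smul_integral_smul {γ : ℝ} (hγ0 : 0 ≤ γ) (hγ1 : γ < 1) (hU : 0 ≤ U)
    (hRU : ∀ t, ∀ᵐ ω ∂P, |R t ω| ≤ U) (hY : ∀ τ, Integrable (Y τ) P)
    (hYC : ∀ τ, ∫ ω, ‖Y τ ω‖ ∂P ≤ C) :
    Summable fun p : ℕ × ℕ => ‖γ ^ (p.1 + p.2) • ∫ ω, R (p.1 + p.2) ω • Y p.1 ω ∂P‖ := by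
  have hgeom := summable_geometric_of_lt_one hγ0 hγ1
  refine .of_nonneg_of_le (fun _ => norm_nonneg _) (fun p => ?_)
    ((hgeom.mul_of_nonneg hgeom (fun _ => pow_nonneg hγ0 _) fun _ => pow_nonneg hγ0 _).mul_right
      (U * C))
  have hRY : ‖∫ ω, R (p.1 + p.2) ω • Y p.1 ω ∂P‖ ≤ U * C :=
    (norm_integral_le_integral_norm _).trans ((integral_norm_smul_le_of_ae_abs_le (hRU _)
      (hY _)).trans (mul_le_mul_of_nonneg_left (hYC _) hU))
  rw [norm_smul, Real.norm_of_nonneg (pow_nonneg hγ0 _), pow_add, mul_assoc, mul_assoc]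
  exact mul_le_mul_of_nonneg_left (mul_le_mul_of_nonneg_left hRY (pow_nonneg hγ0 _))
    (pow_nonneg hγ0 _)

theorem tsum_pow_smul_integral_smul [CompleteSpace E] {γ : ℝ} (hγ0 : 0 ≤ γ) (hγ1 : γ < 1)
    (hR : ∀ t, Measurable (R t)) (hRU : ∀ t, ∀ᵐ ω ∂P, |R t ω| ≤ U) (hY : ∀ τ, Integrable (Y τ) P)
    (τ : ℕ) :
    ∑' n, γ ^ (τ + n) • ∫ ω, R (τ + n) ω • Y τ ω ∂P
      = γ ^ τ • ∫ ω, (∑' n, γ ^ n * R (τ + n) ω) • Y τ ω ∂P := by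
  rw [integral_tsum_smul_of_ae_abs_le (fun n => ((hR _).const_mul _).aestronglyMeasurable)
    (fun n => (hRU (τ + n)).mono fun ω hω => abs_pow_mul_le hγ0 hω n)
    ((summable_geometric_of_lt_one hγ0 hγ1).mul_right U) (hY τ), ← tsum_const_smul'']
  refine tsum_congr fun n => ?_
  simp only [pow_add, mul_smul, integral_smul]

theorem indepFun_mul_smul_sum_range [MeasurableSpace E] [BorelSpace E] [SecondCountableTopology E]
    {β : Type*} [MeasurableSpace β] {T : Ω → β}
    (hindep : Indep (MeasurableSpace.comap T inferInstance)
      (⨆ t : ℕ, (MeasurableSpace.comap (R t) inferInstance ⊔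
        MeasurableSpace.comap (Y t) inferInstance)) P) (c : ℝ) (t n : ℕ) :
    IndepFun T (fun ω => (c * R t ω) • ∑ τ ∈ range n, Y τ ω) P := by
  refine indepFun_of_indep_comap hindep ?_
  exact ((Measurable.of_comap_le (le_iSup_of_le t le_sup_left)).const_mul c).smul
    (Finset.measurable_sum _ fun τ _ => Measurable.of_comap_le (le_iSup_of_le τ le_sup_right))

theorem integrable_and_integral_sum_range_pow_mul_smul_sum_range [MeasurableSpace E]
    [BorelSpace E] [SecondCountableTopology E] [IsProbabilityMeasure P] {T : Ω → ℕ} {s : ℝ}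
    (hs0 : 0 ≤ s) (hs1 : s < 1) (hT : Measurable T)
    (hTdist : ∀ t, P {ω | T ω = t} = ENNReal.ofReal ((1 - s) * s ^ t)) (hU : 0 ≤ U)
    (hR : ∀ t, Measurable (R t)) (hRU : ∀ t, ∀ᵐ ω ∂P, |R t ω| ≤ U)
    (hYm : ∀ τ, Measurable (Y τ)) (hY : ∀ τ, Integrable (Y τ) P)
    (hYC : ∀ τ, ∫ ω, ‖Y τ ω‖ ∂P ≤ C)
    (hindep : Indep (MeasurableSpace.comap T inferInstance)
      (⨆ t : ℕ, (MeasurableSpace.comap (R t) inferInstance ⊔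
        MeasurableSpace.comap (Y t) inferInstance)) P) :
    Integrable (fun ω => ∑ t ∈ range (T ω + 1), (s ^ t * R t ω) • ∑ τ ∈ range (t + 1), Y τ ω) P ∧
      ∫ ω, ∑ t ∈ range (T ω + 1), (s ^ t * R t ω) • ∑ τ ∈ range (t + 1), Y τ ω ∂P
        = ∑' t, (s ^ t * s ^ t) • ∑ τ ∈ range (t + 1), ∫ ω, R t ω • Y τ ω ∂P := by
  have hTtail := measureReal_setOf_le_eq_pow_of_geometric hT hs0 hs1.le hTdist
  have hXm : ∀ t, Measurable fun ω => (s ^ t * R t ω) • ∑ τ ∈ range (t + 1), Y τ ω := fun t =>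
    ((hR t).const_mul _).smul (Finset.measurable_sum _ fun τ _ => hYm τ)
  have hXi : ∀ t, Integrable (fun ω => (s ^ t * R t ω) • ∑ τ ∈ range (t + 1), Y τ ω) P :=
    fun t => (integrable_finsetSum _ fun τ _ => hY τ).bdd_smul _
      ((hR t).const_mul _).aestronglyMeasurable
      ((hRU t).mono fun ω hω => abs_pow_mul_le hs0 hω t)
  have hXsum : Summable fun t => P.real {ω | t ≤ T ω} *
      ∫ ω, ‖(s ^ t * R t ω) • ∑ τ ∈ range (t + 1), Y τ ω‖ ∂P := by
    simpa only [hTtail] using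
      summable_pow_mul_integral_norm_smul_sum_range hs0 hs1 hU hRU hY hYC
  have hXind := fun t => indepFun_mul_smul_sum_range hindep (s ^ t) t (t + 1)
  refine ⟨integrable_sum_range_succ_of_indepFun hT hXm hXi hXind hXsum, ?_⟩
  rw [integral_sum_range_succ_of_indepFun hT hXi hXind hXsum]
  exact tsum_congr fun t => by rw [hTtail, integral_mul_smul_sum_range hR hRU hY, smul_smul]

end PolicyGradient

theorem stmt1_general {Ω : Type*} [MeasurableSpace Ω] (P : Measure Ω) [IsProbabilityMeasure P]
    (d : ℕ) (γ UR CY : ℝ) (hγ : γ ∈ Set.Ioo (0 : ℝ) 1) (hUR : 0 ≤ UR)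
    (T : Ω → ℕ) (hT : Measurable T)
    (hTdist : ∀ t : ℕ, P {ω | T ω = t} = ENNReal.ofReal ((1 - Real.sqrt γ) * Real.sqrt γ ^ t))
    (R : ℕ → Ω → ℝ) (hRm : ∀ t, Measurable (R t)) (hRb : ∀ t, ∀ᵐ ω ∂P, |R t ω| ≤ UR)
    (Y : ℕ → Ω → EuclideanSpace ℝ (Fin d)) (hYm : ∀ t, Measurable (Y t))
    (hYint : ∀ t, Integrable (Y t) P) (hYb : ∀ t, ∫ ω, ‖Y t ω‖ ∂P ≤ CY)
    (hindep : Indep (MeasurableSpace.comap T inferInstance)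
      (⨆ t : ℕ, (MeasurableSpace.comap (R t) inferInstance ⊔
        MeasurableSpace.comap (Y t) inferInstance)) P) :
    Integrable (fun ω => ∑ t ∈ Finset.range (T ω + 1),
        (Real.sqrt γ ^ t * R t ω) • ∑ τ ∈ Finset.range (t + 1), Y τ ω) P ∧
    (∀ τ : ℕ, ∀ᵐ ω ∂P, Summable (fun n : ℕ => |γ ^ n * R (τ + n) ω|) ∧
        |∑' n : ℕ, γ ^ n * R (τ + n) ω| ≤ UR / (1 - γ)) ∧
    Summable (fun τ : ℕ =>
        ‖γ ^ τ • ∫ ω, (∑' n : ℕ, γ ^ n * R (τ + n) ω) • Y τ ω ∂P‖) ∧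
    (∫ ω, ∑ t ∈ Finset.range (T ω + 1),
        (Real.sqrt γ ^ t * R t ω) • ∑ τ ∈ Finset.range (t + 1), Y τ ω ∂P)
      = ∑' τ : ℕ, γ ^ τ • ∫ ω, (∑' n : ℕ, γ ^ n * R (τ + n) ω) • Y τ ω ∂P := by
  obtain ⟨hγ0, hγ1⟩ := hγ
  obtain ⟨hint, hmean⟩ := integrable_and_integral_sum_range_pow_mul_smul_sum_range
    (Real.sqrt_nonneg γ) ((Real.sqrt_lt' one_pos).2 (by rwa [one_pow])) hT hTdist hUR hRm hRb
    hYm hYint hYb hindep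
  have haSum := summable_norm_pow_smul_integral_smul hγ0.le hγ1 hUR hRb hYint hYb
  refine ⟨hint, fun τ => ?_, ?_, ?_⟩
  · filter_upwards [ae_all_iff.2 fun n => hRb (τ + n)] with ω hω
    exact ⟨summable_abs_pow_mul hγ0.le hγ1 hω, abs_tsum_pow_mul_le hγ0.le hγ1 hω⟩
  · refine haSum.prod.of_nonneg_of_le (fun _ => norm_nonneg _) fun τ => ?_
    rw [← tsum_pow_smul_integral_smul hγ0.le hγ1 hRm hRb hYint]
    exact norm_tsum_le_tsum_norm (haSum.prod_factor τ)
  rw [hmean, ← tsum_congr (tsum_pow_smul_integral_smul hγ0.le hγ1 hRm hRb hYint),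
    ← haSum.of_norm.tsum_prod, haSum.of_norm.tsum_eq_tsum_sum_antidiagonal]
  refine tsum_congr fun t => ?_
  rw [← mul_pow, Real.mul_self_sqrt hγ0.le, smul_sum, Nat.sum_antidiagonal_eq_sum_range_succ_mk]
  exact sum_congr rfl fun k hk => by rw [Nat.add_sub_cancel' (mem_range_succ_iff.1 hk)]

/-- Unbiasedness of the random-horizon policy gradient estimator (abstract form of the
paper's Lemma 1).  `T ~ Geom(1-γ^{1/2})` is independent of the sequence `((R_t),(Y_t))`,
the rewards are bounded by `U_R`, and the score terms `Y_t` have first moment at most `C_Y`.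
Then the estimator `ĝ = Σ_{t=0}^{T} γ^{t/2} R_t (Σ_{τ≤t} Y_τ)` is integrable; for each τ
the tail series `Q_τ = Σ_{t≥τ} γ^{t-τ} R_t` converges absolutely a.s. with `|Q_τ| ≤ U_R/(1-γ)`;
the series `Σ_τ γ^τ 𝔼[Q_τ • Y_τ]` converges absolutely; and `𝔼[ĝ] = Σ_τ γ^τ 𝔼[Q_τ • Y_τ]`. -/
theorem stmt1 {Ω : Type*} [MeasurableSpace Ω] (P : Measure Ω) [IsProbabilityMeasure P]
    (d : ℕ) (γ UR CY : ℝ) (hγ : γ ∈ Set.Ioo (0 : ℝ) 1) (hUR : 0 ≤ UR) (hCY : 0 ≤ CY)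
    (T : Ω → ℕ) (hT : Measurable T)
    (hTdist : ∀ t : ℕ, P {ω | T ω = t} = ENNReal.ofReal ((1 - Real.sqrt γ) * Real.sqrt γ ^ t))
    (R : ℕ → Ω → ℝ) (hRm : ∀ t, Measurable (R t)) (hRb : ∀ t, ∀ᵐ ω ∂P, |R t ω| ≤ UR)
    (Y : ℕ → Ω → EuclideanSpace ℝ (Fin d)) (hYm : ∀ t, Measurable (Y t))
    (hYint : ∀ t, Integrable (Y t) P) (hYb : ∀ t, ∫ ω, ‖Y t ω‖ ∂P ≤ CY)
    (hindep : Indep (MeasurableSpace.comap T inferInstance)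
      (⨆ t : ℕ, (MeasurableSpace.comap (R t) inferInstance ⊔
        MeasurableSpace.comap (Y t) inferInstance)) P) :
    Integrable (fun ω => ∑ t ∈ Finset.range (T ω + 1),
        (Real.sqrt γ ^ t * R t ω) • ∑ τ ∈ Finset.range (t + 1), Y τ ω) P ∧
    (∀ τ : ℕ, ∀ᵐ ω ∂P, Summable (fun n : ℕ => |γ ^ n * R (τ + n) ω|) ∧
        |∑' n : ℕ, γ ^ n * R (τ + n) ω| ≤ UR / (1 - γ)) ∧
    Summable (fun τ : ℕ =>
        ‖γ ^ τ • ∫ ω, (∑' n : ℕ, γ ^ n * R (τ + n) ω) • Y τ ω ∂P‖) ∧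
    (∫ ω, ∑ t ∈ Finset.range (T ω + 1),
        (Real.sqrt γ ^ t * R t ω) • ∑ τ ∈ Finset.range (t + 1), Y τ ω ∂P)
      = ∑' τ : ℕ, γ ^ τ • ∫ ω, (∑' n : ℕ, γ ^ n * R (τ + n) ω) • Y τ ω ∂P :=
  stmt1_general P d γ UR CY hγ hUR T hT hTdist R hRm hRb Y hYm hYint hYb hindep
end

section
/- Let (Z, 𝒵) be a measurable space with a σ-finite measure μ, let n, d ∈ ℕ, γ ∈ (0,1), β ∈ (0,1], and U_R, M, M_Q, B, M_ρ, λ, B_λ ≥ 0. Let ρ : ℝ^n × Z → ℝ, Q : ℝ^n × Z → ℝ and h : ℝ^n × Z → ℝ^d be families, measurable in z for each θ, satisfying for all θ, θ₁, θ₂ ∈ ℝ^n and all z ∈ Z: (a) ρ(θ, z) ≥ 0 and ∫_Z ρ(θ, z) dμ(z) = 1; (b) |Q(θ, z)| ≤ U_R/(1−γ); (c) ‖h(θ₁, z) − h(θ₂, z)‖ ≤ M‖θ₁ − θ₂‖^β; (d) |Q(θ₁, z) − Q(θ₂, z)| ≤ M_Q‖θ₁ − θ₂‖; (e) ∫_Z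 ‖h(θ, z)‖ ρ(θ, z) dμ(z) ≤ B^{1/2}; (f) ∫_Z |ρ(θ₁, z) − ρ(θ₂, z)| dμ(z) ≤ M_ρ‖θ₁ − θ₂‖; (g) there is a measurable set C ⊆ Z with ∫_{Z∖C} ‖h(θ, z)‖ ρ(θ, z) dμ(z) ≤ λ for all θ, and ‖h(θ, z)‖ ≤ B_λ for all θ and all z ∈ C. Define G(θ) := (1/(1−γ)) ∫_Z Q(θ, z)·h(θ, z)·ρ(θ, z) dμ(z) (a well-defined Bochner integral). Then for all θ₁, θ₂ ∈ ℝ^n, ‖G(θ₁) − G(θ₂)‖ ≤ M_J·(‖θ₁ − θ₂‖^β + ‖θ₁ − θ₂‖ + λ), where M_J := max{ 2U_R M/(1−γ)², M_Q B^{1/2}/(1−γ) + U_R B_λ M_ρ/(1−γ)², 2U_R/(1−γ)² }. -/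
open MeasureTheory

set_option maxHeartbeats 1000000

/-- Generalized Hölder continuity of the policy gradient (abstract form of the paper's
Lemma 2).  `ρ(θ,·)` is a probability density, `Q(θ,·)` is bounded by `U_R/(1-γ)` and
`M_Q`-Lipschitz in `θ`, the score `h(θ,·)` is `(M,β)`-Hölder in `θ` with integrable norm
bounded by `√B`, `ρ` is `M_ρ`-Lipschitz in `L¹`, and `C` realizes the exploration
tolerance `λ` with on-set score bound `B_λ`.  Then the gradient
`G(θ) = (1/(1-γ)) ∫ Q(θ,z) h(θ,z) ρ(θ,z) dμ(z)` satisfies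
`‖G(θ₁)-G(θ₂)‖ ≤ M_J (‖θ₁-θ₂‖^β + ‖θ₁-θ₂‖ + λ)`. -/
theorem stmt4 {Z : Type*} [MeasurableSpace Z] (μ : Measure Z) [SigmaFinite μ]
    (n d : ℕ) (γ β UR M MQ B Mρ lam Blam : ℝ)
    (hγ : γ ∈ Set.Ioo (0 : ℝ) 1) (hβ : β ∈ Set.Ioc (0 : ℝ) 1)
    (hUR : 0 ≤ UR) (hM : 0 ≤ M) (hMQ : 0 ≤ MQ) (hB : 0 ≤ B) (hMρ : 0 ≤ Mρ)
    (hlam : 0 ≤ lam) (hBlam : 0 ≤ Blam)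
    (ρ : EuclideanSpace ℝ (Fin n) → Z → ℝ)
    (Q : EuclideanSpace ℝ (Fin n) → Z → ℝ)
    (h : EuclideanSpace ℝ (Fin n) → Z → EuclideanSpace ℝ (Fin d))
    (hρm : ∀ θ, Measurable (ρ θ)) (hQm : ∀ θ, Measurable (Q θ)) (hhm : ∀ θ, Measurable (h θ))
    -- (a): ρ(θ,·) is a probability density
    (hρnn : ∀ θ z, 0 ≤ ρ θ z) (hρint : ∀ θ, Integrable (ρ θ) μ)
    (hρ1 : ∀ θ, ∫ z, ρ θ z ∂μ = 1)
    -- (b): boundedness of Q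
    (hQb : ∀ θ z, |Q θ z| ≤ UR / (1 - γ))
    -- (c): Hölder continuity of the score h
    (hhH : ∀ θ₁ θ₂ z, ‖h θ₁ z - h θ₂ z‖ ≤ M * ‖θ₁ - θ₂‖ ^ β)
    -- (d): Lipschitz continuity of Q
    (hQL : ∀ θ₁ θ₂ z, |Q θ₁ z - Q θ₂ z| ≤ MQ * ‖θ₁ - θ₂‖)
    -- (e): integrability of the score w.r.t. the density
    (hhρint : ∀ θ, Integrable (fun z => ‖h θ z‖ * ρ θ z) μ)
    (hhρb : ∀ θ, ∫ z, ‖h θ z‖ * ρ θ z ∂μ ≤ Real.sqrt B)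
    -- (f): L¹-Lipschitz continuity of the density
    (hρL1 : ∀ θ₁ θ₂ : EuclideanSpace ℝ (Fin n),
      ∫ z, |ρ θ₁ z - ρ θ₂ z| ∂μ ≤ Mρ * ‖θ₁ - θ₂‖)
    -- (g): exploration tolerance set C
    (C : Set Z) (hC : MeasurableSet C)
    (hCout : ∀ θ, ∫ z in Cᶜ, ‖h θ z‖ * ρ θ z ∂μ ≤ lam)
    (hCb : ∀ θ, ∀ z ∈ C, ‖h θ z‖ ≤ Blam)
    (MJ : ℝ)
    (hMJ : MJ = max (2 * UR * M / (1 - γ) ^ 2)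
      (max (MQ * Real.sqrt B / (1 - γ) + UR * Blam * Mρ / (1 - γ) ^ 2)
        (2 * UR / (1 - γ) ^ 2))) :
    ∀ θ₁ θ₂ : EuclideanSpace ℝ (Fin n),
      ‖(1 / (1 - γ)) • ∫ z, (Q θ₁ z * ρ θ₁ z) • h θ₁ z ∂μ
        - (1 / (1 - γ)) • ∫ z, (Q θ₂ z * ρ θ₂ z) • h θ₂ z ∂μ‖
        ≤ MJ * (‖θ₁ - θ₂‖ ^ β + ‖θ₁ - θ₂‖ + lam) := by

  intro θ₁ θ₂
  obtain ⟨hγ0, hγ1⟩ := hγ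
  have h1γ : (0:ℝ) < 1 - γ := by linarith
  set t := ‖θ₁ - θ₂‖ with ht
  have ht0 : (0:ℝ) ≤ t := norm_nonneg _
  have htb : (0:ℝ) ≤ t ^ β := Real.rpow_nonneg ht0 β
  set κ := UR / (1 - γ) with hκ
  have hκ0 : (0:ℝ) ≤ κ := div_nonneg hUR h1γ.le
  have hsqB : (0:ℝ) ≤ Real.sqrt B := Real.sqrt_nonneg B
  -- generic triangle bound for the score
  have hhb : ∀ (θ θ' : EuclideanSpace ℝ (Fin n)) z,
      ‖h θ z‖ ≤ ‖h θ' z‖ + M * ‖θ - θ'‖ ^ β := by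
    intro θ θ' z
    have h1 : ‖h θ z‖ - ‖h θ' z‖ ≤ ‖h θ z - h θ' z‖ := norm_sub_norm_le _ _
    have h2 := hhH θ θ' z
    linarith
  -- cross integrability
  have hint : ∀ θ θ' : EuclideanSpace ℝ (Fin n),
      Integrable (fun z => ‖h θ z‖ * ρ θ' z) μ := by
    intro θ θ'
    refine ((hhρint θ').add ((hρint θ').const_mul (M * ‖θ - θ'‖ ^ β))).mono
      (((hhm θ).norm.mul (hρm θ')).aestronglyMeasurable) ?_
    filter_upwards with z
    simp only [Pi.add_apply]
    have hnn : (0:ℝ) ≤ ‖h θ' z‖ * ρ θ' z + M * ‖θ - θ'‖ ^ β * ρ θ' z := by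
      have := hρnn θ' z
      have := Real.rpow_nonneg (norm_nonneg (θ - θ')) β
      positivity
    rw [Real.norm_eq_abs, Real.norm_eq_abs,
      abs_of_nonneg (mul_nonneg (norm_nonneg _) (hρnn θ' z)), abs_of_nonneg hnn]
    have := hhb θ θ' z
    nlinarith [hρnn θ' z]
  -- aestrongly measurable smul families
  have hfaesm : ∀ (q r : Z → ℝ) (v : Z → EuclideanSpace ℝ (Fin d)),
      Measurable q → Measurable r → Measurable v →
      AEStronglyMeasurable (fun z => (q z * r z) • v z) μ := by
    intro q r v hq hr hv
    exact ((hq.mul hr).aestronglyMeasurable.smul hv.aestronglyMeasurable)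
  -- integrability of the gradient integrand
  have hfint : ∀ θ, Integrable (fun z => (Q θ z * ρ θ z) • h θ z) μ := by
    intro θ
    refine ((hhρint θ).const_mul κ).mono (hfaesm _ _ _ (hQm θ) (hρm θ) (hhm θ)) ?_
    filter_upwards with z
    rw [norm_smul, Real.norm_eq_abs, abs_mul, Real.norm_eq_abs,
      abs_of_nonneg (mul_nonneg hκ0 (mul_nonneg (norm_nonneg _) (hρnn θ z)))]
    have h1 := hQb θ z
    have h2 := hρnn θ z
    have h3 : |ρ θ z| = ρ θ z := abs_of_nonneg h2
    rw [h3]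
    nlinarith [mul_le_mul_of_nonneg_right (mul_le_mul_of_nonneg_right h1 h2)
      (norm_nonneg (h θ z))]
  -- the three pieces
  set g1 := fun z => ((Q θ₁ z - Q θ₂ z) * ρ θ₁ z) • h θ₁ z with hg1d
  set g2 := fun z => (Q θ₂ z * ρ θ₁ z) • (h θ₁ z - h θ₂ z) with hg2d
  set g3 := fun z => (Q θ₂ z * (ρ θ₁ z - ρ θ₂ z)) • h θ₂ z with hg3d
  -- pointwise bounds
  have hb1 : ∀ z, ‖g1 z‖ ≤ MQ * t * (‖h θ₁ z‖ * ρ θ₁ z) := by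
    intro z
    rw [hg1d]
    simp only
    rw [norm_smul, Real.norm_eq_abs, abs_mul, abs_of_nonneg (hρnn θ₁ z)]
    have h1 := hQL θ₁ θ₂ z
    nlinarith [mul_le_mul_of_nonneg_right (mul_le_mul_of_nonneg_right h1 (hρnn θ₁ z))
      (norm_nonneg (h θ₁ z))]
  have hb2 : ∀ z, ‖g2 z‖ ≤ κ * (M * t ^ β) * ρ θ₁ z := by
    intro z
    rw [hg2d]
    simp only
    rw [norm_smul, Real.norm_eq_abs, abs_mul, abs_of_nonneg (hρnn θ₁ z)]
    have h1 := hQb θ₂ z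
    have h2 := hhH θ₁ θ₂ z
    have h3 : |Q θ₂ z| * ‖h θ₁ z - h θ₂ z‖ ≤ κ * (M * t ^ β) :=
      mul_le_mul h1 h2 (norm_nonneg _) hκ0
    nlinarith [mul_le_mul_of_nonneg_right h3 (hρnn θ₁ z)]
  have hb3 : ∀ z, ‖g3 z‖ ≤ κ * (|ρ θ₁ z - ρ θ₂ z| * ‖h θ₂ z‖) := by
    intro z
    rw [hg3d]
    simp only
    rw [norm_smul, Real.norm_eq_abs, abs_mul]
    have h1 := hQb θ₂ z
    nlinarith [mul_le_mul_of_nonneg_right (mul_le_mul_of_nonneg_right h1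
      (abs_nonneg (ρ θ₁ z - ρ θ₂ z))) (norm_nonneg (h θ₂ z))]
  -- dominators
  have hD1 : Integrable (fun z => MQ * t * (‖h θ₁ z‖ * ρ θ₁ z)) μ :=
    (hhρint θ₁).const_mul _
  have hD2 : Integrable (fun z => κ * (M * t ^ β) * ρ θ₁ z) μ :=
    (hρint θ₁).const_mul _
  have habsint : Integrable (fun z => |ρ θ₁ z - ρ θ₂ z|) μ :=
    ((hρint θ₁).sub (hρint θ₂)).abs
  have hφint : Integrable (fun z => κ * (‖h θ₁ z‖ * ρ θ₁ z)
      + κ * (M * t ^ β) * ρ θ₁ z + κ * (‖h θ₂ z‖ * ρ θ₂ z)) μ :=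
    (((hhρint θ₁).const_mul κ).add ((hρint θ₁).const_mul _)).add
      ((hhρint θ₂).const_mul κ)
  have hφb : ∀ z, |ρ θ₁ z - ρ θ₂ z| * ‖h θ₂ z‖
      ≤ ‖h θ₁ z‖ * ρ θ₁ z + (M * t ^ β) * ρ θ₁ z + ‖h θ₂ z‖ * ρ θ₂ z := by
    intro z
    have h1 : |ρ θ₁ z - ρ θ₂ z| ≤ ρ θ₁ z + ρ θ₂ z := by
      rw [abs_sub_le_iff]
      constructor
      · have := hρnn θ₂ z; linarith
      · have := hρnn θ₁ z; linarith
    have h2 : ‖h θ₂ z‖ ≤ ‖h θ₁ z‖ + M * t ^ β := by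
      have := hhb θ₂ θ₁ z
      rw [norm_sub_rev] at this
      exact this
    calc |ρ θ₁ z - ρ θ₂ z| * ‖h θ₂ z‖
        ≤ (ρ θ₁ z + ρ θ₂ z) * ‖h θ₂ z‖ :=
          mul_le_mul_of_nonneg_right h1 (norm_nonneg _)
      _ = ρ θ₁ z * ‖h θ₂ z‖ + ‖h θ₂ z‖ * ρ θ₂ z := by ring
      _ ≤ ρ θ₁ z * (‖h θ₁ z‖ + M * t ^ β) + ‖h θ₂ z‖ * ρ θ₂ z := by
          have := mul_le_mul_of_nonneg_left h2 (hρnn θ₁ z); linarith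
      _ = ‖h θ₁ z‖ * ρ θ₁ z + (M * t ^ β) * ρ θ₁ z + ‖h θ₂ z‖ * ρ θ₂ z := by ring
  -- integrability of the pieces
  have hig1 : Integrable g1 μ := by
    refine hD1.mono (hfaesm _ _ _ ((hQm θ₁).sub (hQm θ₂)) (hρm θ₁) (hhm θ₁)) ?_
    filter_upwards with z
    have hnn := hρnn θ₁ z
    rw [Real.norm_eq_abs, abs_of_nonneg (by positivity : (0:ℝ) ≤ MQ * t * (‖h θ₁ z‖ * ρ θ₁ z))]
    exact hb1 z
  have hig2 : Integrable g2 μ := by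
    have hmeas : AEStronglyMeasurable g2 μ :=
      ((hQm θ₂).mul (hρm θ₁)).aestronglyMeasurable.smul
        ((hhm θ₁).sub (hhm θ₂)).aestronglyMeasurable
    refine hD2.mono hmeas ?_
    filter_upwards with z
    have hnn := hρnn θ₁ z
    rw [Real.norm_eq_abs, abs_of_nonneg (by positivity : (0:ℝ) ≤ κ * (M * t ^ β) * ρ θ₁ z)]
    exact hb2 z
  have hig3 : Integrable g3 μ := by
    refine hφint.mono
      (hfaesm _ _ _ (hQm θ₂) ((hρm θ₁).sub (hρm θ₂)) (hhm θ₂)) ?_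
    filter_upwards with z
    have hrhs : (0:ℝ) ≤ κ * (‖h θ₁ z‖ * ρ θ₁ z) + κ * (M * t ^ β) * ρ θ₁ z
        + κ * (‖h θ₂ z‖ * ρ θ₂ z) := by
      have := hρnn θ₁ z; have := hρnn θ₂ z; positivity
    rw [Real.norm_eq_abs, abs_of_nonneg hrhs]
    have h1 := hb3 z
    have h2 := mul_le_mul_of_nonneg_left (hφb z) hκ0
    nlinarith [h1, h2]
  -- decomposition of the difference
  have hsum : (∫ z, (Q θ₁ z * ρ θ₁ z) • h θ₁ z ∂μ) - (∫ z, (Q θ₂ z * ρ θ₂ z) • h θ₂ z ∂μ)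
      = (∫ z, g1 z ∂μ) + (∫ z, g2 z ∂μ) + (∫ z, g3 z ∂μ) := by
    have hpt : (fun z => (Q θ₁ z * ρ θ₁ z) • h θ₁ z - (Q θ₂ z * ρ θ₂ z) • h θ₂ z)
        = fun z => g1 z + g2 z + g3 z := by
      funext z
      rw [hg1d, hg2d, hg3d]
      simp only
      module
    calc (∫ z, (Q θ₁ z * ρ θ₁ z) • h θ₁ z ∂μ) - (∫ z, (Q θ₂ z * ρ θ₂ z) • h θ₂ z ∂μ)
        = ∫ z, ((Q θ₁ z * ρ θ₁ z) • h θ₁ z - (Q θ₂ z * ρ θ₂ z) • h θ₂ z) ∂μ :=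
          (integral_sub (hfint θ₁) (hfint θ₂)).symm
      _ = ∫ z, (g1 z + g2 z + g3 z) ∂μ := by rw [hpt]
      _ = (∫ z, (g1 z + g2 z) ∂μ) + ∫ z, g3 z ∂μ := integral_add (hig1.add hig2) hig3
      _ = (∫ z, g1 z ∂μ) + (∫ z, g2 z ∂μ) + ∫ z, g3 z ∂μ := by
          rw [integral_add hig1 hig2]
  -- bound for g1
  have hI1 : ‖∫ z, g1 z ∂μ‖ ≤ MQ * Real.sqrt B * t := by
    calc ‖∫ z, g1 z ∂μ‖ ≤ ∫ z, ‖g1 z‖ ∂μ := norm_integral_le_integral_norm _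
      _ ≤ ∫ z, MQ * t * (‖h θ₁ z‖ * ρ θ₁ z) ∂μ := integral_mono hig1.norm hD1 hb1
      _ = MQ * t * ∫ z, ‖h θ₁ z‖ * ρ θ₁ z ∂μ := integral_const_mul _ _
      _ ≤ MQ * t * Real.sqrt B :=
        mul_le_mul_of_nonneg_left (hhρb θ₁) (by positivity)
      _ = MQ * Real.sqrt B * t := by ring
  -- bound for g2
  have hI2 : ‖∫ z, g2 z ∂μ‖ ≤ κ * M * t ^ β := by
    calc ‖∫ z, g2 z ∂μ‖ ≤ ∫ z, ‖g2 z‖ ∂μ := norm_integral_le_integral_norm _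
      _ ≤ ∫ z, κ * (M * t ^ β) * ρ θ₁ z ∂μ := integral_mono hig2.norm hD2 hb2
      _ = κ * (M * t ^ β) * ∫ z, ρ θ₁ z ∂μ := integral_const_mul _ _
      _ = κ * M * t ^ β := by rw [hρ1]; ring
  -- bound for g3
  have hI3 : ‖∫ z, g3 z ∂μ‖ ≤ κ * Blam * (Mρ * t) + (κ * lam + κ * (M * t ^ β) + κ * lam) := by
    have hCc : MeasurableSet Cᶜ := hC.compl
    have hnorm3 : Integrable (fun z => ‖g3 z‖) μ := hig3.norm
    have hsplit3 : ∫ z, ‖g3 z‖ ∂μ = (∫ z in C, ‖g3 z‖ ∂μ) + ∫ z in Cᶜ, ‖g3 z‖ ∂μ :=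
      (integral_add_compl hC hnorm3).symm
    -- on C
    have hInC : ∫ z in C, ‖g3 z‖ ∂μ ≤ κ * Blam * (Mρ * t) := by
      have step1 : ∫ z in C, ‖g3 z‖ ∂μ ≤ ∫ z in C, κ * Blam * |ρ θ₁ z - ρ θ₂ z| ∂μ := by
        refine setIntegral_mono_on hnorm3.integrableOn
          ((habsint.const_mul (κ * Blam)).integrableOn) hC ?_
        intro z hz
        have h1 := hb3 z
        have h2 := mul_le_mul_of_nonneg_left
          (mul_le_mul_of_nonneg_left (hCb θ₂ z hz) (abs_nonneg (ρ θ₁ z - ρ θ₂ z))) hκ0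
        nlinarith [h1, h2]
      have step2 : ∫ z in C, κ * Blam * |ρ θ₁ z - ρ θ₂ z| ∂μ
          = κ * Blam * ∫ z in C, |ρ θ₁ z - ρ θ₂ z| ∂μ := integral_const_mul _ _
      have step3 : ∫ z in C, |ρ θ₁ z - ρ θ₂ z| ∂μ ≤ ∫ z, |ρ θ₁ z - ρ θ₂ z| ∂μ :=
        setIntegral_le_integral habsint (Filter.Eventually.of_forall fun z => abs_nonneg _)
      have step4 := hρL1 θ₁ θ₂
      calc ∫ z in C, ‖g3 z‖ ∂μ ≤ κ * Blam * ∫ z in C, |ρ θ₁ z - ρ θ₂ z| ∂μ := by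
            rw [← step2]; exact step1
        _ ≤ κ * Blam * (Mρ * t) := by
            have : ∫ z in C, |ρ θ₁ z - ρ θ₂ z| ∂μ ≤ Mρ * t := le_trans step3 step4
            exact mul_le_mul_of_nonneg_left this (by positivity)
    -- on Cᶜ
    have hOutC : ∫ z in Cᶜ, ‖g3 z‖ ∂μ ≤ κ * lam + κ * (M * t ^ β) + κ * lam := by
      have hptr : ∀ z, ‖g3 z‖ ≤ κ * (‖h θ₁ z‖ * ρ θ₁ z)
          + κ * (M * t ^ β) * ρ θ₁ z + κ * (‖h θ₂ z‖ * ρ θ₂ z) := by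
        intro z
        have h1 := hb3 z
        have h2 := mul_le_mul_of_nonneg_left (hφb z) hκ0
        nlinarith [h1, h2]
      have step1 : ∫ z in Cᶜ, ‖g3 z‖ ∂μ ≤ ∫ z in Cᶜ, (κ * (‖h θ₁ z‖ * ρ θ₁ z)
          + κ * (M * t ^ β) * ρ θ₁ z + κ * (‖h θ₂ z‖ * ρ θ₂ z)) ∂μ :=
        setIntegral_mono hnorm3.integrableOn hφint.integrableOn hptr
      have step2 : ∫ z in Cᶜ, (κ * (‖h θ₁ z‖ * ρ θ₁ z)
          + κ * (M * t ^ β) * ρ θ₁ z + κ * (‖h θ₂ z‖ * ρ θ₂ z)) ∂μ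
          = κ * (∫ z in Cᶜ, ‖h θ₁ z‖ * ρ θ₁ z ∂μ)
          + κ * (M * t ^ β) * (∫ z in Cᶜ, ρ θ₁ z ∂μ)
          + κ * (∫ z in Cᶜ, ‖h θ₂ z‖ * ρ θ₂ z ∂μ) := by
        have i1 : IntegrableOn (fun z => κ * (‖h θ₁ z‖ * ρ θ₁ z)) Cᶜ μ :=
          ((hhρint θ₁).const_mul κ).integrableOn
        have i2 : IntegrableOn (fun z => κ * (M * t ^ β) * ρ θ₁ z) Cᶜ μ :=
          ((hρint θ₁).const_mul _).integrableOn
        have i3 : IntegrableOn (fun z => κ * (‖h θ₂ z‖ * ρ θ₂ z)) Cᶜ μ :=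
          ((hhρint θ₂).const_mul κ).integrableOn
        calc ∫ z in Cᶜ, (κ * (‖h θ₁ z‖ * ρ θ₁ z)
              + κ * (M * t ^ β) * ρ θ₁ z + κ * (‖h θ₂ z‖ * ρ θ₂ z)) ∂μ
            = (∫ z in Cᶜ, (κ * (‖h θ₁ z‖ * ρ θ₁ z) + κ * (M * t ^ β) * ρ θ₁ z) ∂μ)
              + ∫ z in Cᶜ, κ * (‖h θ₂ z‖ * ρ θ₂ z) ∂μ := integral_add (i1.add i2) i3
          _ = (∫ z in Cᶜ, κ * (‖h θ₁ z‖ * ρ θ₁ z) ∂μ)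
              + (∫ z in Cᶜ, κ * (M * t ^ β) * ρ θ₁ z ∂μ)
              + ∫ z in Cᶜ, κ * (‖h θ₂ z‖ * ρ θ₂ z) ∂μ := by rw [integral_add i1 i2]
          _ = κ * (∫ z in Cᶜ, ‖h θ₁ z‖ * ρ θ₁ z ∂μ)
              + κ * (M * t ^ β) * (∫ z in Cᶜ, ρ θ₁ z ∂μ)
              + κ * (∫ z in Cᶜ, ‖h θ₂ z‖ * ρ θ₂ z ∂μ) := by
              rw [integral_const_mul, integral_const_mul, integral_const_mul]
      have b1 := hCout θ₁
      have b2 := hCout θ₂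
      have b3 : ∫ z in Cᶜ, ρ θ₁ z ∂μ ≤ 1 := by
        have := setIntegral_le_integral (s := Cᶜ) (hρint θ₁)
          (Filter.Eventually.of_forall fun z => hρnn θ₁ z)
        rw [hρ1 θ₁] at this
        exact this
      calc ∫ z in Cᶜ, ‖g3 z‖ ∂μ ≤ κ * (∫ z in Cᶜ, ‖h θ₁ z‖ * ρ θ₁ z ∂μ)
            + κ * (M * t ^ β) * (∫ z in Cᶜ, ρ θ₁ z ∂μ)
            + κ * (∫ z in Cᶜ, ‖h θ₂ z‖ * ρ θ₂ z ∂μ) := by rw [← step2]; exact step1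
        _ ≤ κ * lam + κ * (M * t ^ β) + κ * lam := by
            have p1 : κ * (∫ z in Cᶜ, ‖h θ₁ z‖ * ρ θ₁ z ∂μ) ≤ κ * lam :=
              mul_le_mul_of_nonneg_left b1 hκ0
            have p2 : κ * (M * t ^ β) * (∫ z in Cᶜ, ρ θ₁ z ∂μ) ≤ κ * (M * t ^ β) := by
              have : (0:ℝ) ≤ κ * (M * t ^ β) := by positivity
              nlinarith
            have p3 : κ * (∫ z in Cᶜ, ‖h θ₂ z‖ * ρ θ₂ z ∂μ) ≤ κ * lam :=
              mul_le_mul_of_nonneg_left b2 hκ0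
            linarith
    calc ‖∫ z, g3 z ∂μ‖ ≤ ∫ z, ‖g3 z‖ ∂μ := norm_integral_le_integral_norm _
      _ = (∫ z in C, ‖g3 z‖ ∂μ) + ∫ z in Cᶜ, ‖g3 z‖ ∂μ := hsplit3
      _ ≤ κ * Blam * (Mρ * t) + (κ * lam + κ * (M * t ^ β) + κ * lam) :=
          add_le_add hInC hOutC
  -- combine
  have hdiff : ‖(∫ z, (Q θ₁ z * ρ θ₁ z) • h θ₁ z ∂μ)
      - ∫ z, (Q θ₂ z * ρ θ₂ z) • h θ₂ z ∂μ‖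
      ≤ MQ * Real.sqrt B * t + κ * M * t ^ β
        + (κ * Blam * (Mρ * t) + (κ * lam + κ * (M * t ^ β) + κ * lam)) := by
    rw [hsum]
    calc ‖(∫ z, g1 z ∂μ) + (∫ z, g2 z ∂μ) + ∫ z, g3 z ∂μ‖
        ≤ ‖(∫ z, g1 z ∂μ) + ∫ z, g2 z ∂μ‖ + ‖∫ z, g3 z ∂μ‖ := norm_add_le _ _
      _ ≤ ‖∫ z, g1 z ∂μ‖ + ‖∫ z, g2 z ∂μ‖ + ‖∫ z, g3 z ∂μ‖ := by
          have := norm_add_le (∫ z, g1 z ∂μ) (∫ z, g2 z ∂μ)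
          linarith
      _ ≤ MQ * Real.sqrt B * t + κ * M * t ^ β
          + (κ * Blam * (Mρ * t) + (κ * lam + κ * (M * t ^ β) + κ * lam)) := by
          exact add_le_add (add_le_add hI1 hI2) hI3
  rw [← smul_sub, norm_smul, Real.norm_eq_abs,
    abs_of_nonneg (by positivity : (0:ℝ) ≤ 1 / (1 - γ))]
  have hA1 : 2 * UR * M / (1 - γ) ^ 2 ≤ MJ := by rw [hMJ]; exact le_max_left _ _
  have hA2 : MQ * Real.sqrt B / (1 - γ) + UR * Blam * Mρ / (1 - γ) ^ 2 ≤ MJ := by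
    rw [hMJ]; exact le_trans (le_max_left _ _) (le_max_right _ _)
  have hA3 : 2 * UR / (1 - γ) ^ 2 ≤ MJ := by
    rw [hMJ]; exact le_trans (le_max_right _ _) (le_max_right _ _)
  have heq : (1 / (1 - γ)) * (MQ * Real.sqrt B * t + κ * M * t ^ β
      + (κ * Blam * (Mρ * t) + (κ * lam + κ * (M * t ^ β) + κ * lam)))
      = (2 * UR * M / (1 - γ) ^ 2) * t ^ β
        + (MQ * Real.sqrt B / (1 - γ) + UR * Blam * Mρ / (1 - γ) ^ 2) * t
        + (2 * UR / (1 - γ) ^ 2) * lam := by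
    rw [hκ]
    field_simp
    ring
  have hmain : (1 / (1 - γ)) * ‖(∫ z, (Q θ₁ z * ρ θ₁ z) • h θ₁ z ∂μ)
      - ∫ z, (Q θ₂ z * ρ θ₂ z) • h θ₂ z ∂μ‖
      ≤ (2 * UR * M / (1 - γ) ^ 2) * t ^ β
        + (MQ * Real.sqrt B / (1 - γ) + UR * Blam * Mρ / (1 - γ) ^ 2) * t
        + (2 * UR / (1 - γ) ^ 2) * lam := by
    rw [← heq]
    exact mul_le_mul_of_nonneg_left hdiff (by positivity)
  have e1 := mul_le_mul_of_nonneg_right hA1 htb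
  have e2 := mul_le_mul_of_nonneg_right hA2 ht0
  have e3 := mul_le_mul_of_nonneg_right hA3 hlam
  have : MJ * (t ^ β + t + lam) = MJ * t ^ β + MJ * t + MJ * lam := by ring
  linarith
end

section
/- Let d ∈ ℕ, M_J ≥ 0, β ∈ (0,1] and λ ≥ 0. Let J : ℝ^d → ℝ be differentiable with gradient ∇J satisfying ‖∇J(θ₁) − ∇J(θ₂)‖ ≤ M_J·(‖θ₁ − θ₂‖^β + ‖θ₁ − θ₂‖ + λ) for all θ₁, θ₂ ∈ ℝ^d. Then for all θ₁, θ₂ ∈ ℝ^d, |J(θ₁) − J(θ₂) − ⟨∇J(θ₂), θ₁ − θ₂⟩| ≤ M_J·(‖θ₁ − θ₂‖^{1+β} + ‖θ₁ − θ₂‖² + λ·‖θ₁ − θ₂‖). -/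
open scoped RealInnerProductSpace

/-!
On the closed ball of radius `r = ‖θ₁ - θ₂‖` around `θ₂` the gradient stays within
`M_J (r^β + r + λ)` of `∇J(θ₂)`, by the Hölder bound and monotonicity of `t ↦ t^β + t + λ`.
The mean value inequality for `J - ⟪∇J(θ₂), ·⟫` turns this into the bound
`M_J (r^β + r + λ) r`, which is the claimed right-hand side since `r^β r = r^(1+β)`.
-/

section MeanValue

variable {E : Type*} [NormedAddCommGroup E] [InnerProductSpace ℝ E] [CompleteSpace E]

theorem Convex.abs_sub_sub_inner_le_of_norm_gradient_sub_le {f : E → ℝ} {f' : E → E} {s : Set E}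
    {g : E} {C : ℝ} {x y : E} (hs : Convex ℝ s) (hf : ∀ z ∈ s, HasGradientWithinAt f (f' z) s z)
    (bound : ∀ z ∈ s, ‖f' z - g‖ ≤ C) (xs : x ∈ s) (ys : y ∈ s) :
    |f y - f x - ⟪g, y - x⟫| ≤ C * ‖y - x‖ := by
  have bound' : ∀ z ∈ s, ‖InnerProductSpace.toDual ℝ E (f' z) - InnerProductSpace.toDual ℝ E g‖
      ≤ C := fun z hz => by
    rw [← map_sub, LinearIsometryEquiv.norm_map]
    exact bound z hz
  exact hs.norm_image_sub_le_of_norm_hasFDerivWithin_le' hf bound' xs ys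

theorem abs_sub_sub_inner_le_of_norm_gradient_sub_le {f : E → ℝ} {f' : E → E} {ω : ℝ → ℝ}
    (hf : ∀ x, HasGradientAt f (f' x) x) (hω : MonotoneOn ω (Set.Ici 0))
    (hf' : ∀ x y, ‖f' x - f' y‖ ≤ ω ‖x - y‖) (x y : E) :
    |f y - f x - ⟪f' x, y - x⟫| ≤ ω ‖y - x‖ * ‖y - x‖ := by
  refine (convex_closedBall x ‖y - x‖).abs_sub_sub_inner_le_of_norm_gradient_sub_le
    (fun z _ => (hf z).hasFDerivAt.hasFDerivWithinAt) (fun z hz => ?_)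
    (Metric.mem_closedBall_self (norm_nonneg _)) (mem_closedBall_iff_norm.2 le_rfl)
  exact (hf' z x).trans
    (hω (norm_nonneg _) (norm_nonneg _) (mem_closedBall_iff_norm.1 hz))

end MeanValue

theorem monotoneOn_rpow_add_self_add {β : ℝ} (hβ : 0 ≤ β) (c : ℝ) :
    MonotoneOn (fun t : ℝ => t ^ β + t + c) (Set.Ici 0) := fun _ ha _ _ hab => by
  have := Real.rpow_le_rpow ha hab hβ
  linarith

theorem stmt5_general (d : ℕ) (MJ : ℝ) (hMJ : 0 ≤ MJ) (β : ℝ) (hβ : β ∈ Set.Ioc (0 : ℝ) 1)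
    (lam : ℝ)
    (J : EuclideanSpace ℝ (Fin d) → ℝ)
    (J' : EuclideanSpace ℝ (Fin d) → EuclideanSpace ℝ (Fin d))
    (hdiff : ∀ θ, HasGradientAt J (J' θ) θ)
    (hHolder : ∀ θ₁ θ₂ : EuclideanSpace ℝ (Fin d),
      ‖J' θ₁ - J' θ₂‖ ≤ MJ * (‖θ₁ - θ₂‖ ^ β + ‖θ₁ - θ₂‖ + lam)) :
    ∀ θ₁ θ₂ : EuclideanSpace ℝ (Fin d),
      |J θ₁ - J θ₂ - ⟪J' θ₂, θ₁ - θ₂⟫|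
        ≤ MJ * (‖θ₁ - θ₂‖ ^ (1 + β) + ‖θ₁ - θ₂‖ ^ 2 + lam * ‖θ₁ - θ₂‖) := by
  intro θ₁ θ₂
  have hω : MonotoneOn (fun t : ℝ => MJ * (t ^ β + t + lam)) (Set.Ici 0) :=
    fun _ ha _ hb hab =>
      mul_le_mul_of_nonneg_left (monotoneOn_rpow_add_self_add hβ.1.le lam ha hb hab) hMJ
  calc |J θ₁ - J θ₂ - ⟪J' θ₂, θ₁ - θ₂⟫|
      ≤ MJ * (‖θ₁ - θ₂‖ ^ β + ‖θ₁ - θ₂‖ + lam) * ‖θ₁ - θ₂‖ :=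
        abs_sub_sub_inner_le_of_norm_gradient_sub_le hdiff hω hHolder θ₂ θ₁
    _ = MJ * (‖θ₁ - θ₂‖ ^ (1 + β) + ‖θ₁ - θ₂‖ ^ 2 + lam * ‖θ₁ - θ₂‖) := by
        rw [Real.rpow_one_add' (norm_nonneg _) (by linarith [hβ.1])]
        ring

/-- Descent-lemma-type smoothness (the paper's Lemma 3): if the gradient of `J`
satisfies the generalized Hölder bound
`‖∇J(θ₁)-∇J(θ₂)‖ ≤ M_J(‖θ₁-θ₂‖^β + ‖θ₁-θ₂‖ + λ)`, then
`|J(θ₁)-J(θ₂)-⟨∇J(θ₂),θ₁-θ₂⟩| ≤ M_J(‖θ₁-θ₂‖^{1+β} + ‖θ₁-θ₂‖² + λ‖θ₁-θ₂‖)`. -/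
theorem stmt5 (d : ℕ) (MJ : ℝ) (hMJ : 0 ≤ MJ) (β : ℝ) (hβ : β ∈ Set.Ioc (0 : ℝ) 1)
    (lam : ℝ) (hlam : 0 ≤ lam)
    (J : EuclideanSpace ℝ (Fin d) → ℝ)
    (J' : EuclideanSpace ℝ (Fin d) → EuclideanSpace ℝ (Fin d))
    (hdiff : ∀ θ, HasGradientAt J (J' θ) θ)
    (hHolder : ∀ θ₁ θ₂ : EuclideanSpace ℝ (Fin d),
      ‖J' θ₁ - J' θ₂‖ ≤ MJ * (‖θ₁ - θ₂‖ ^ β + ‖θ₁ - θ₂‖ + lam)) :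
    ∀ θ₁ θ₂ : EuclideanSpace ℝ (Fin d),
      |J θ₁ - J θ₂ - ⟪J' θ₂, θ₁ - θ₂⟫|
        ≤ MJ * (‖θ₁ - θ₂‖ ^ (1 + β) + ‖θ₁ - θ₂‖ ^ 2 + lam * ‖θ₁ - θ₂‖) :=
  stmt5_general d MJ hMJ β hβ lam J J' hdiff hHolder
end

section
/- Let (Ω, ℱ, ℙ) be a probability space and 𝒢 ⊆ ℱ a sub-σ-algebra. Let d ∈ ℕ, M_J ≥ 0, β ∈ (0,1], λ ≥ 0, η > 0 and D₁, D_{1+β}, D₂ ≥ 0. Let J : ℝ^d → ℝ be differentiable, bounded (|J(x)| ≤ J_max for all x), and satisfying the smoothness inequality |J(x) − J(y) − ⟨∇J(y), x − y⟩| ≤ M_J·(‖x − y‖^{1+β} + ‖x − y‖² + λ‖x − y‖) for all x, y ∈ ℝ^d. Let θ : Ω → ℝ^d be 𝒢-measurable and let g : Ω → ℝ^d be square-integrable with 𝔼[g | 𝒢] = ∇J(θ) almost surely, 𝔼[‖g‖ | 𝒢] ≤ D₁, 𝔼[‖g‖^{1+β} | 𝒢] ≤ D_{1+β} and 𝔼[‖g‖²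 | 𝒢] ≤ D₂ almost surely. Then, almost surely, 𝔼[J(θ + η·g) | 𝒢] ≥ J(θ) + η·‖∇J(θ)‖² − M_J·(η^{1+β}·D_{1+β} + η²·D₂ + η·λ·D₁). -/
/-!
Write `X = ∇J(θ)`. The smoothness inequality at the pair `(θ + ηg, θ)` bounds `J(θ + ηg)` from
below by `J(θ) + η⟪X, g⟫ - M_J(η^{1+β}‖g‖^{1+β} + η²‖g‖² + ηλ‖g‖)`, and conditioning on `𝒢` is
monotone and linear. `J(θ)` is `𝒢`-measurable, the moment terms are controlled by `D₁, D_{1+β}, D₂`,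
and `𝔼[⟪X, g⟫ | 𝒢] = ⟪X, 𝔼[g | 𝒢]⟫ = ‖X‖²` by the pull-out property. The latter needs `X` bounded:
comparing `J` at two points at distance one along `∇J(y)` shows `‖∇J(y)‖ ≤ 2 J_max + M_J(2 + λ)`.
-/

open MeasureTheory
open scoped RealInnerProductSpace

section Smoothness

variable {E : Type*} [NormedAddCommGroup E] [InnerProductSpace ℝ E]

def SmoothnessInequality (J : E → ℝ) (J' : E → E) (MJ β lam : ℝ) : Prop :=
  ∀ x y, |J x - J y - ⟪J' y, x - y⟫| ≤ MJ * (‖x - y‖ ^ (1 + β) + ‖x - y‖ ^ 2 + lam * ‖x - y‖)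

theorem norm_le_of_abs_sub_inner_le {J : E → ℝ} {y v : E} {Jmax B : ℝ}
    (hJ : ∀ x, |J x| ≤ Jmax) (hB : 0 ≤ B)
    (h : ∀ x, ‖x - y‖ = 1 → |J x - J y - ⟪v, x - y⟫| ≤ B) :
    ‖v‖ ≤ 2 * Jmax + B := by
  rcases eq_or_ne v 0 with rfl | hv
  · linarith [norm_zero (E := E), (abs_nonneg _).trans (hJ y)]
  set x := y + ‖v‖⁻¹ • v
  have hx : ‖x - y‖ = 1 := by simpa [x] using norm_smul_inv_norm (𝕜 := ℝ) hv
  have hvx : ⟪v, x - y⟫ = ‖v‖ := by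
    simp [x, real_inner_smul_right, sq, norm_ne_zero_iff.2 hv]
  have h := h x hx
  rw [hvx] at h
  linarith [abs_le.1 h, abs_le.1 (hJ x), abs_le.1 (hJ y)]

namespace SmoothnessInequality

variable {J : E → ℝ} {J' : E → E} {MJ β lam : ℝ}

theorem norm_le (hsmooth : SmoothnessInequality J J' MJ β lam) {Jmax : ℝ}
    (hJ : ∀ x, |J x| ≤ Jmax) (hMJ : 0 ≤ MJ) (hlam : 0 ≤ lam) (y : E) :
    ‖J' y‖ ≤ 2 * Jmax + MJ * (2 + lam) :=
  norm_le_of_abs_sub_inner_le hJ (by positivity) fun x hx => by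
    have h := hsmooth x y
    rw [hx, Real.one_rpow] at h
    linarith

theorem sub_le_apply_add_smul (hsmooth : SmoothnessInequality J J' MJ β lam) {η : ℝ}
    (hη : 0 ≤ η) (x v : E) :
    J x + η * ⟪J' x, v⟫ - MJ * (η ^ (1 + β) * ‖v‖ ^ (1 + β) + η ^ 2 * ‖v‖ ^ 2 + η * lam * ‖v‖)
      ≤ J (x + η • v) := by
  have h := hsmooth (x + η • v) x
  rw [add_sub_cancel_left, real_inner_smul_right, norm_smul, Real.norm_of_nonneg hη,
    Real.mul_rpow hη (norm_nonneg v), mul_pow] at h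
  linarith [(abs_le.1 h).1]

end SmoothnessInequality

end Smoothness

namespace MeasureTheory

variable {Ω : Type*} {m mΩ : MeasurableSpace Ω} {μ : Measure Ω}

theorem integrable_comp_of_abs_le {E : Type*} [TopologicalSpace E] [IsFiniteMeasure μ]
    {J : E → ℝ} (hJ : Continuous J) {Jmax : ℝ} (hJbdd : ∀ x, |J x| ≤ Jmax) {X : Ω → E}
    (hX : AEStronglyMeasurable X μ) :
    Integrable (fun ω => J (X ω)) μ :=
  .of_bound (hJ.comp_aestronglyMeasurable hX) Jmax (ae_of_all _ fun _ => hJbdd _)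

theorem MemLp.integrable_norm_rpow_of_le {E : Type*} [NormedAddCommGroup E] [IsFiniteMeasure μ]
    {f : Ω → E} {p : ENNReal} {q : ℝ} (hf : MemLp f p μ) (hq : 0 ≤ q)
    (hqp : ENNReal.ofReal q ≤ p) :
    Integrable (fun ω => ‖f ω‖ ^ q) μ := by
  simpa [ENNReal.toReal_ofReal hq] using (hf.mono_exponent hqp).integrable_norm_rpow'

theorem condExp_inner_ae_eq_norm_sq {E : Type*} [NormedAddCommGroup E] [InnerProductSpace ℝ E]
    [CompleteSpace E] (hm : m ≤ mΩ) [IsFiniteMeasure μ] {X g : Ω → E}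
    (hX : AEStronglyMeasurable[m] X μ) {C : ℝ} (hXC : ∀ᵐ ω ∂μ, ‖X ω‖ ≤ C) (hg : Integrable g μ)
    (hgX : μ[g|m] =ᵐ[μ] X) :
    μ[fun ω => ⟪X ω, g ω⟫|m] =ᵐ[μ] fun ω => ‖X ω‖ ^ 2 := by
  filter_upwards [condExp_aestronglyMeasurable_bilin_of_bound (innerSL ℝ) hm hX hg C hXC, hgX]
    with ω h hω
  rw [hω] at h
  exact h.trans (real_inner_self_eq_norm_sq _)

theorem ae_add_mul_sub_mul_le_condExp (hm : m ≤ mΩ) [SigmaFinite (μ.trim hm)]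
    {j k s f : Ω → ℝ} (hj : StronglyMeasurable[m] j) (hji : Integrable j μ)
    (hk : Integrable k μ) (hs : Integrable s μ) (hf : Integrable f μ) (a b : ℝ)
    (h : ∀ ω, j ω + a * k ω - b * s ω ≤ f ω) :
    ∀ᵐ ω ∂μ, j ω + a * μ[k|m] ω - b * μ[s|m] ω ≤ μ[f|m] ω := by
  have hlin : μ[j + a • k - b • s|m] =ᵐ[μ] j + a • μ[k|m] - b • μ[s|m] := by
    refine (condExp_sub (hji.add (hk.smul a)) (hs.smul b) m).trans ?_
    refine .sub ?_ (condExp_smul b s m)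
    refine (condExp_add hji (hk.smul a) m).trans ?_
    rw [condExp_of_stronglyMeasurable hm hj hji]
    exact .add .rfl (condExp_smul a k m)
  filter_upwards [hlin, condExp_mono (m := m) ((hji.add (hk.smul a)).sub (hs.smul b)) hf
    (ae_of_all _ h)] with ω hω hmono
  simpa [hω] using hmono

theorem ae_condExp_sum_mul_le {ι : Type*} (s : Finset ι) {f : ι → Ω → ℝ} {a d : ι → ℝ}
    (ha : ∀ i ∈ s, 0 ≤ a i) (hf : ∀ i ∈ s, Integrable (f i) μ)
    (hd : ∀ i ∈ s, ∀ᵐ ω ∂μ, μ[f i|m] ω ≤ d i) :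
    ∀ᵐ ω ∂μ, μ[fun ω => ∑ i ∈ s, a i * f i ω|m] ω ≤ ∑ i ∈ s, a i * d i := by
  have hfun : (fun ω => ∑ i ∈ s, a i * f i ω) = ∑ i ∈ s, a i • f i := by
    ext ω
    simp [Finset.sum_apply]
  rw [hfun]
  filter_upwards [condExp_finsetSum (fun i hi => (hf i hi).smul (a i)) m,
    (Filter.eventually_all_finset s).2 fun i _ => condExp_smul (m := m) (μ := μ) (a i) (f i),
    (Filter.eventually_all_finset s).2 hd] with ω hsum hsmul hdω
  rw [hsum, Finset.sum_apply]
  refine Finset.sum_le_sum fun i hi => ?_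
  rw [hsmul i hi, Pi.smul_apply, smul_eq_mul]
  exact mul_le_mul_of_nonneg_left (hdω i hi) (ha i hi)

end MeasureTheory

theorem stmt6_general {Ω : Type*} {mΩ : MeasurableSpace Ω} (P : Measure Ω) [IsProbabilityMeasure P]
    (𝒢 : MeasurableSpace Ω) (h𝒢 : 𝒢 ≤ mΩ)
    (d : ℕ) (MJ β lam η D₁ D1β D₂ Jmax : ℝ)
    (hMJ : 0 ≤ MJ) (hβ : β ∈ Set.Ioc (0 : ℝ) 1) (hlam : 0 ≤ lam) (hη : 0 < η)
    (J : EuclideanSpace ℝ (Fin d) → ℝ)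
    (J' : EuclideanSpace ℝ (Fin d) → EuclideanSpace ℝ (Fin d))
    (hJdiff : ∀ x, HasGradientAt J (J' x) x)
    (hJbdd : ∀ x, |J x| ≤ Jmax)
    (hsmooth : ∀ x y : EuclideanSpace ℝ (Fin d),
      |J x - J y - ⟪J' y, x - y⟫|
        ≤ MJ * (‖x - y‖ ^ (1 + β) + ‖x - y‖ ^ 2 + lam * ‖x - y‖))
    (θ : Ω → EuclideanSpace ℝ (Fin d)) (hθ : Measurable[𝒢] θ)
    (g : Ω → EuclideanSpace ℝ (Fin d)) (hg : MemLp g 2 P)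
    (hgmean : P[g | 𝒢] =ᵐ[P] fun ω => J' (θ ω))
    (hg1 : ∀ᵐ ω ∂P, (P[fun ω' => ‖g ω'‖ | 𝒢]) ω ≤ D₁)
    (hg1β : ∀ᵐ ω ∂P, (P[fun ω' => ‖g ω'‖ ^ (1 + β) | 𝒢]) ω ≤ D1β)
    (hg2 : ∀ᵐ ω ∂P, (P[fun ω' => ‖g ω'‖ ^ 2 | 𝒢]) ω ≤ D₂) :
    ∀ᵐ ω ∂P,
      J (θ ω) + η * ‖J' (θ ω)‖ ^ 2
          - MJ * (η ^ (1 + β) * D1β + η ^ 2 * D₂ + η * lam * D₁)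
        ≤ (P[fun ω' => J (θ ω' + η • g ω') | 𝒢]) ω := by
  have hJ : Continuous J := continuous_iff_continuousAt.2 fun x => (hJdiff x).continuousAt
  have hgrad := SmoothnessInequality.norm_le hsmooth hJbdd hMJ hlam
  have hX : AEStronglyMeasurable[𝒢] (fun ω => J' (θ ω)) P :=
    stronglyMeasurable_condExp.aestronglyMeasurable.congr hgmean
  have hgi : Integrable g P := hg.integrable one_le_two
  have hθm : AEStronglyMeasurable[mΩ] θ P := (hθ.mono h𝒢 le_rfl).aestronglyMeasurable
  have hJθ : StronglyMeasurable[𝒢] fun ω => J (θ ω) := (hJ.measurable.comp hθ).stronglyMeasurable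
  have hmom₁β : Integrable (fun ω => ‖g ω‖ ^ (1 + β)) P :=
    hg.integrable_norm_rpow_of_le (by linarith [hβ.1])
      (ENNReal.ofReal_le_of_le_toReal (by norm_num; linarith [hβ.2]))
  have hmom₂ : Integrable (fun ω => ‖g ω‖ ^ 2) P := hg.integrable_norm_pow two_ne_zero
  have hlow := ae_add_mul_sub_mul_le_condExp h𝒢 hJθ
    (k := fun ω => ⟪J' (θ ω), g ω⟫) (f := fun ω => J (θ ω + η • g ω))
    (s := fun ω => η ^ (1 + β) * ‖g ω‖ ^ (1 + β) + η ^ 2 * ‖g ω‖ ^ 2 + η * lam * ‖g ω‖)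
    (integrable_comp_of_abs_le hJ hJbdd hθm)
    ((innerSL ℝ).integrable_of_bilin_of_bdd_left _ (hX.mono h𝒢)
      (ae_of_all _ fun ω => hgrad (θ ω)) hgi)
    (((hmom₁β.const_mul _).add (hmom₂.const_mul _)).add (hgi.norm.const_mul _))
    (integrable_comp_of_abs_le hJ hJbdd (hθm.add (hgi.1.const_smul η)))
    η MJ fun ω => SmoothnessInequality.sub_le_apply_add_smul hsmooth hη.le (θ ω) (g ω)
  have hinner := condExp_inner_ae_eq_norm_sq h𝒢 hX (ae_of_all _ fun ω => hgrad (θ ω)) hgi hgmean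
  have hmoments : ∀ᵐ ω ∂P, P[fun ω => η ^ (1 + β) * ‖g ω‖ ^ (1 + β) + η ^ 2 * ‖g ω‖ ^ 2
      + η * lam * ‖g ω‖ | 𝒢] ω ≤ η ^ (1 + β) * D1β + η ^ 2 * D₂ + η * lam * D₁ := by
    simpa [Fin.sum_univ_three, add_assoc] using ae_condExp_sum_mul_le (μ := P) (m := 𝒢) .univ
      (a := ![η ^ (1 + β), η ^ 2, η * lam]) (d := ![D1β, D₂, D₁])
      (f := ![fun ω => ‖g ω‖ ^ (1 + β), fun ω => ‖g ω‖ ^ 2, fun ω => ‖g ω‖])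
      (by simp [Fin.forall_fin_succ]; exact ⟨by positivity, by positivity, by positivity⟩)
      (by simp [Fin.forall_fin_succ, hmom₁β, hmom₂, hgi.norm])
      (by simp [Fin.forall_fin_succ, hg1β, hg2, hg1])
  filter_upwards [hlow, hinner, hmoments] with ω hlow hinner hmoments
  rw [hinner] at hlow
  linarith [mul_le_mul_of_nonneg_left hmoments hMJ]

/-- Single-step expected ascent inequality (from the proof of the paper's Theorem 1):
under the smoothness inequality for `J`, a `𝒢`-measurable iterate `θ` and a
square-integrable stochastic gradient `g` with `𝔼[g|𝒢] = ∇J(θ)` and conditional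
moment bounds `D₁, D_{1+β}, D₂`, one has a.s.
`𝔼[J(θ+ηg)|𝒢] ≥ J(θ) + η‖∇J(θ)‖² - M_J(η^{1+β}D_{1+β} + η²D₂ + ηλD₁)`. -/
theorem stmt6 {Ω : Type*} {mΩ : MeasurableSpace Ω} (P : Measure Ω) [IsProbabilityMeasure P]
    (𝒢 : MeasurableSpace Ω) (h𝒢 : 𝒢 ≤ mΩ)
    (d : ℕ) (MJ β lam η D₁ D1β D₂ Jmax : ℝ)
    (hMJ : 0 ≤ MJ) (hβ : β ∈ Set.Ioc (0 : ℝ) 1) (hlam : 0 ≤ lam) (hη : 0 < η)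
    (hD₁ : 0 ≤ D₁) (hD1β : 0 ≤ D1β) (hD₂ : 0 ≤ D₂)
    (J : EuclideanSpace ℝ (Fin d) → ℝ)
    (J' : EuclideanSpace ℝ (Fin d) → EuclideanSpace ℝ (Fin d))
    (hJdiff : ∀ x, HasGradientAt J (J' x) x)
    (hJbdd : ∀ x, |J x| ≤ Jmax)
    (hsmooth : ∀ x y : EuclideanSpace ℝ (Fin d),
      |J x - J y - ⟪J' y, x - y⟫|
        ≤ MJ * (‖x - y‖ ^ (1 + β) + ‖x - y‖ ^ 2 + lam * ‖x - y‖))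
    (θ : Ω → EuclideanSpace ℝ (Fin d)) (hθ : Measurable[𝒢] θ)
    (g : Ω → EuclideanSpace ℝ (Fin d)) (hg : MemLp g 2 P)
    (hgmean : P[g | 𝒢] =ᵐ[P] fun ω => J' (θ ω))
    (hg1 : ∀ᵐ ω ∂P, (P[fun ω' => ‖g ω'‖ | 𝒢]) ω ≤ D₁)
    (hg1β : ∀ᵐ ω ∂P, (P[fun ω' => ‖g ω'‖ ^ (1 + β) | 𝒢]) ω ≤ D1β)
    (hg2 : ∀ᵐ ω ∂P, (P[fun ω' => ‖g ω'‖ ^ 2 | 𝒢]) ω ≤ D₂) :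
    ∀ᵐ ω ∂P,
      J (θ ω) + η * ‖J' (θ ω)‖ ^ 2
          - MJ * (η ^ (1 + β) * D1β + η ^ 2 * D₂ + η * lam * D₁)
        ≤ (P[fun ω' => J (θ ω' + η • g ω') | 𝒢]) ω :=
  stmt6_general P 𝒢 h𝒢 d MJ β lam η D₁ D1β D₂ Jmax hMJ hβ hlam hη J J' hJdiff hJbdd hsmooth θ hθ g
    hg hgmean hg1 hg1β hg2
end

section
/- Let (Ω, ℱ, ℙ) be a probability space with a filtration (ℱ_k)_{k∈ℕ}. Let d ∈ ℕ, M_J ≥ 0, β ∈ (0,1], λ ≥ 0, η > 0, J* ∈ ℝ and D₁, D_{1+β}, D₂ ≥ 0. Let J : ℝ^d → ℝ be differentiable, bounded, with J(x) ≤ J* for all x, and satisfying the smoothness inequality |J(x) − J(y) − ⟨∇J(y), x − y⟩| ≤ M_J·(‖x − y‖^{1+β} + ‖x − y‖² + λ‖x − y‖) for all x, y ∈ ℝ^d. Let θ₀ ∈ ℝ^d be deterministic and define θ_{k+1} = θ_k + η·g_k, where each g_k : Ω → ℝ^d is ℱ_{k+1}-measurable and square-integrable with, almost surely, 𝔼[g_k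 | ℱ_k] = ∇J(θ_k), 𝔼[‖g_k‖ | ℱ_k] ≤ D₁, 𝔼[‖g_k‖^{1+β} | ℱ_k] ≤ D_{1+β} and 𝔼[‖g_k‖² | ℱ_k] ≤ D₂. Then for every K ≥ 1, (1/K)·Σ_{k=0}^{K−1} 𝔼[‖∇J(θ_k)‖²] ≤ (J* − J(θ₀))/(η·K) + M_J·(η^β·D_{1+β} + η·D₂ + λ·D₁). -/
/-!
Smoothness bounds the gain of one ascent step from below by `η ⟪∇J(θ_k), g_k⟫` minus
`M_J (η^{1+β}‖g_k‖^{1+β} + η²‖g_k‖² + λη‖g_k‖)`. Taking expectations, the pull-out property of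
conditional expectation turns `𝔼⟪∇J(θ_k), g_k⟫` into `𝔼‖∇J(θ_k)‖²`, and the conditional moment
bounds control the remainder, so `𝔼J(θ_k)` increases by at least
`η (𝔼‖∇J(θ_k)‖² - M_J(η^β D_{1+β} + η D₂ + λ D₁))` per step. Summing over `k < K` telescopes,
and `𝔼J(θ_K) ≤ J*` gives the bound.
-/

open MeasureTheory
open scoped RealInnerProductSpace

section

variable {Ω E : Type*} [NormedAddCommGroup E] [InnerProductSpace ℝ E]

theorem integral_le_of_ae_condExp_le {m m0 : MeasurableSpace Ω} {μ : Measure Ω}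
    [IsProbabilityMeasure μ] (hm : m ≤ m0) {f : Ω → ℝ} {c : ℝ} (hf : ∀ᵐ ω ∂μ, μ[f | m] ω ≤ c) :
    ∫ ω, f ω ∂μ ≤ c := by
  rw [← integral_condExp hm]
  simpa using integral_mono_ae integrable_condExp (integrable_const c) hf

theorem ae_norm_le_of_condExp_eq {m m0 : MeasurableSpace Ω} {μ : Measure Ω} [CompleteSpace E]
    {g X : Ω → E} {c : ℝ} (hX : μ[g | m] =ᵐ[μ] X) (hc : ∀ᵐ ω ∂μ, μ[fun ω => ‖g ω‖ | m] ω ≤ c) :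
    ∀ᵐ ω ∂μ, ‖X ω‖ ≤ c := by
  filter_upwards [norm_condExp_le g, hX, hc] with ω h hXω hcω
  rw [← hXω]
  exact h.trans hcω

theorem integral_inner_eq_integral_norm_sq_of_condExp_eq {m m0 : MeasurableSpace Ω}
    {μ : Measure Ω} [CompleteSpace E] (hm : m ≤ m0) [SigmaFinite (μ.trim hm)] {g X : Ω → E}
    (hX : StronglyMeasurable[m] X) (hXg : Integrable (fun ω => ⟪X ω, g ω⟫) μ)
    (hg : Integrable g μ) (hgX : μ[g | m] =ᵐ[μ] X) :
    ∫ ω, ⟪X ω, g ω⟫ ∂μ = ∫ ω, ‖X ω‖ ^ 2 ∂μ := by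
  rw [← integral_condExp hm]
  refine integral_congr_ae ?_
  filter_upwards [condExp_bilin_of_stronglyMeasurable_left (innerSL ℝ) hX hXg hg, hgX]
    with ω hω hgω
  rw [hgω] at hω
  rw [← real_inner_self_eq_norm_sq]
  exact hω

theorem MeasureTheory.MemLp.integrable_norm_rpow_of_le_s7 {F : Type*} [NormedAddCommGroup F]
    {m0 : MeasurableSpace Ω} {μ : Measure Ω} [IsFiniteMeasure μ] {f : Ω → F} {p : ℝ} {q : ENNReal}
    (hf : MemLp f q μ) (hp : 0 ≤ p) (hpq : ENNReal.ofReal p ≤ q) :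
    Integrable (fun ω => ‖f ω‖ ^ p) μ := by
  simpa [ENNReal.toReal_ofReal hp] using (hf.mono_exponent hpq).integrable_norm_rpow'

theorem measurable_of_hasGradientAt [CompleteSpace E] [MeasurableSpace E] [BorelSpace E]
    {J : E → ℝ} {J' : E → E} (hJ : ∀ x, HasGradientAt J (J' x) x) : Measurable J' := by
  have : J' = fun x => (InnerProductSpace.toDual ℝ E).symm (fderiv ℝ J x) := by
    funext x
    rw [(hJ x).hasFDerivAt.fderiv, LinearIsometryEquiv.symm_apply_apply]
  rw [this]
  exact (InnerProductSpace.toDual ℝ E).symm.continuous.measurable.comp (measurable_fderiv ℝ J)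

theorem adapted_of_eq_add_smul {m0 : MeasurableSpace Ω} [MeasurableSpace E] [MeasurableAdd₂ E]
    [MeasurableConstSMul ℝ E] {ℱ : Filtration ℕ m0} {θ g : ℕ → Ω → E} {η : ℝ} {x₀ : E}
    (hθ0 : ∀ ω, θ 0 ω = x₀) (hθrec : ∀ k ω, θ (k + 1) ω = θ k ω + η • g k ω)
    (hg : ∀ k, Measurable[ℱ (k + 1)] (g k)) : Adapted ℱ θ := by
  intro k
  induction k with
  | zero => simp only [funext hθ0]; exact measurable_const
  | succ k ih =>
    rw [funext (hθrec k)]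
    exact (ih.mono (ℱ.mono k.le_succ) le_rfl).add ((hg k).const_smul η)

theorem le_apply_add_smul_of_smooth {J : E → ℝ} {J' : E → E} {MJ β lam η : ℝ} (hη : 0 ≤ η)
    (hsmooth : ∀ x y : E, |J x - J y - ⟪J' y, x - y⟫|
      ≤ MJ * (‖x - y‖ ^ (1 + β) + ‖x - y‖ ^ 2 + lam * ‖x - y‖)) (x v : E) :
    J x + η * ⟪J' x, v⟫ - MJ * (η ^ (1 + β) * ‖v‖ ^ (1 + β) + η ^ 2 * ‖v‖ ^ 2 + lam * (η * ‖v‖))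
      ≤ J (x + η • v) := by
  have h := hsmooth (x + η • v) x
  rw [add_sub_cancel_left, norm_smul, Real.norm_of_nonneg hη, inner_smul_right,
    Real.mul_rpow hη (norm_nonneg v), mul_pow] at h
  linarith [(abs_le.mp h).1]

theorem integral_remainder_le_of_condExp_moments {F : Type*} [NormedAddCommGroup F]
    {m m0 : MeasurableSpace Ω} {μ : Measure Ω} [IsProbabilityMeasure μ] (hm : m ≤ m0)
    {β lam η D₁ D1β D₂ : ℝ} (hlam : 0 ≤ lam) (hη : 0 < η) {G : Ω → F} (hG : Integrable G μ)
    (hG1β : Integrable (fun ω => ‖G ω‖ ^ (1 + β)) μ) (hG2 : Integrable (fun ω => ‖G ω‖ ^ 2) μ)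
    (h1 : ∀ᵐ ω ∂μ, μ[fun ω' => ‖G ω'‖ | m] ω ≤ D₁)
    (h1β : ∀ᵐ ω ∂μ, μ[fun ω' => ‖G ω'‖ ^ (1 + β) | m] ω ≤ D1β)
    (h2 : ∀ᵐ ω ∂μ, μ[fun ω' => ‖G ω'‖ ^ 2 | m] ω ≤ D₂) :
    ∫ ω, (η ^ (1 + β) * ‖G ω‖ ^ (1 + β) + η ^ 2 * ‖G ω‖ ^ 2 + lam * (η * ‖G ω‖)) ∂μ
      ≤ η * (η ^ β * D1β + η * D₂ + lam * D₁) := by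
  have hR₁ : Integrable (fun ω => η ^ (1 + β) * ‖G ω‖ ^ (1 + β)) μ := hG1β.const_mul _
  have hR₂ : Integrable (fun ω => η ^ 2 * ‖G ω‖ ^ 2) μ := hG2.const_mul _
  have hR₁₂ : Integrable (fun ω => η ^ (1 + β) * ‖G ω‖ ^ (1 + β) + η ^ 2 * ‖G ω‖ ^ 2) μ :=
    hR₁.add hR₂
  rw [integral_add hR₁₂ ((hG.norm.const_mul η).const_mul lam), integral_add hR₁ hR₂,
    integral_const_mul, integral_const_mul, integral_const_mul, integral_const_mul,
    Real.rpow_add hη, Real.rpow_one]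
  have hηβ : 0 ≤ η ^ β := Real.rpow_nonneg hη.le β
  nlinarith [mul_le_mul_of_nonneg_left (integral_le_of_ae_condExp_le hm h1β) (mul_nonneg hη.le hηβ),
    mul_le_mul_of_nonneg_left (integral_le_of_ae_condExp_le hm h2) (sq_nonneg η),
    mul_le_mul_of_nonneg_left (integral_le_of_ae_condExp_le hm h1) (mul_nonneg hlam hη.le)]

theorem le_integral_apply_add_smul [CompleteSpace E] {m m0 : MeasurableSpace Ω} {μ : Measure Ω}
    [IsProbabilityMeasure μ] (hm : m ≤ m0) {J : E → ℝ} {J' : E → E} {MJ β lam η D₁ D1β D₂ : ℝ}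
    (hMJ : 0 ≤ MJ) (hlam : 0 ≤ lam) (hη : 0 < η)
    (hsmooth : ∀ x y : E, |J x - J y - ⟪J' y, x - y⟫|
      ≤ MJ * (‖x - y‖ ^ (1 + β) + ‖x - y‖ ^ 2 + lam * ‖x - y‖))
    {X G : Ω → E} (hJX : Integrable (fun ω => J (X ω)) μ)
    (hJXG : Integrable (fun ω => J (X ω + η • G ω)) μ)
    (hJ'X : StronglyMeasurable[m] fun ω => J' (X ω)) (hG : Integrable G μ)
    (hG1β : Integrable (fun ω => ‖G ω‖ ^ (1 + β)) μ) (hG2 : Integrable (fun ω => ‖G ω‖ ^ 2) μ)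
    (hmean : μ[G | m] =ᵐ[μ] fun ω => J' (X ω))
    (h1 : ∀ᵐ ω ∂μ, μ[fun ω' => ‖G ω'‖ | m] ω ≤ D₁)
    (h1β : ∀ᵐ ω ∂μ, μ[fun ω' => ‖G ω'‖ ^ (1 + β) | m] ω ≤ D1β)
    (h2 : ∀ᵐ ω ∂μ, μ[fun ω' => ‖G ω'‖ ^ 2 | m] ω ≤ D₂) :
    ∫ ω, J (X ω) ∂μ + η * (∫ ω, ‖J' (X ω)‖ ^ 2 ∂μ - MJ * (η ^ β * D1β + η * D₂ + lam * D₁))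
      ≤ ∫ ω, J (X ω + η • G ω) ∂μ := by
  set R : Ω → ℝ := fun ω =>
    η ^ (1 + β) * ‖G ω‖ ^ (1 + β) + η ^ 2 * ‖G ω‖ ^ 2 + lam * (η * ‖G ω‖)
  have hR : Integrable R μ := ((hG1β.const_mul _).add (hG2.const_mul _)).add
    ((hG.norm.const_mul η).const_mul lam)
  have hR_le := integral_remainder_le_of_condExp_moments hm hlam hη hG hG1β hG2 h1 h1β h2
  have hinner : Integrable (fun ω => ⟪J' (X ω), G ω⟫) μ :=
    (innerSL ℝ).integrable_of_bilin_of_bdd_left D₁ (hJ'X.mono hm).aestronglyMeasurable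
      (ae_norm_le_of_condExp_eq hmean h1) hG
  have hkey := integral_inner_eq_integral_norm_sq_of_condExp_eq hm hJ'X hinner hG hmean
  have hηinner : Integrable (fun ω => η * ⟪J' (X ω), G ω⟫) μ := hinner.const_mul η
  have hlower : Integrable (fun ω => J (X ω) + η * ⟪J' (X ω), G ω⟫) μ := hJX.add hηinner
  calc ∫ ω, J (X ω) ∂μ + η * (∫ ω, ‖J' (X ω)‖ ^ 2 ∂μ - MJ * (η ^ β * D1β + η * D₂ + lam * D₁))
      ≤ ∫ ω, J (X ω) ∂μ + η * ∫ ω, ⟪J' (X ω), G ω⟫ ∂μ - MJ * ∫ ω, R ω ∂μ := by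
        rw [hkey]; nlinarith [mul_le_mul_of_nonneg_left hR_le hMJ]
    _ = ∫ ω, (J (X ω) + η * ⟪J' (X ω), G ω⟫ - MJ * R ω) ∂μ := by
        rw [integral_sub hlower (hR.const_mul MJ), integral_add hJX hηinner,
          integral_const_mul, integral_const_mul]
    _ ≤ ∫ ω, J (X ω + η • G ω) ∂μ :=
        integral_mono (hlower.sub (hR.const_mul MJ)) hJXG
          fun ω => le_apply_add_smul_of_smooth hη.le hsmooth (X ω) (G ω)

theorem mean_le_of_add_mul_sub_le_succ {a b : ℕ → ℝ} {η c A : ℝ} (hη : 0 < η)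
    (hstep : ∀ k, a k + η * (b k - c) ≤ a (k + 1)) (hA : ∀ k, a k ≤ A) {K : ℕ} (hK : 1 ≤ K) :
    1 / (K : ℝ) * ∑ k ∈ Finset.range K, b k ≤ (A - a 0) / (η * K) + c := by
  have htel : η * ∑ k ∈ Finset.range K, (b k - c) ≤ A - a 0 := calc
    η * ∑ k ∈ Finset.range K, (b k - c) ≤ ∑ k ∈ Finset.range K, (a (k + 1) - a k) := by
      rw [Finset.mul_sum]
      exact Finset.sum_le_sum fun k _ => by linarith [hstep k]
    _ = a K - a 0 := Finset.sum_range_sub a K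
    _ ≤ A - a 0 := by linarith [hA K]
  have hK0 : (0 : ℝ) < K := by exact_mod_cast hK
  rw [Finset.sum_sub_distrib, Finset.sum_const, Finset.card_range, nsmul_eq_mul] at htel
  rw [div_add' _ _ _ (by positivity), le_div_iff₀ (by positivity),
    show 1 / (K : ℝ) * (∑ k ∈ Finset.range K, b k) * (η * K) = η * ∑ k ∈ Finset.range K, b k by
      field_simp]
  linarith

end

theorem stmt7_general {Ω : Type*} {m0 : MeasurableSpace Ω} (P : Measure Ω) [IsProbabilityMeasure P]
    (ℱ : Filtration ℕ m0)
    (d : ℕ) (MJ β lam η Jstar D₁ D1β D₂ Jmax : ℝ)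
    (hMJ : 0 ≤ MJ) (hβ : β ∈ Set.Ioc (0 : ℝ) 1) (hlam : 0 ≤ lam) (hη : 0 < η)
    (J : EuclideanSpace ℝ (Fin d) → ℝ)
    (J' : EuclideanSpace ℝ (Fin d) → EuclideanSpace ℝ (Fin d))
    (hJdiff : ∀ x, HasGradientAt J (J' x) x)
    (hJbdd : ∀ x, |J x| ≤ Jmax)
    (hJub : ∀ x, J x ≤ Jstar)
    (hsmooth : ∀ x y : EuclideanSpace ℝ (Fin d),
      |J x - J y - ⟪J' y, x - y⟫|
        ≤ MJ * (‖x - y‖ ^ (1 + β) + ‖x - y‖ ^ 2 + lam * ‖x - y‖))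
    (θ0 : EuclideanSpace ℝ (Fin d))
    (θ : ℕ → Ω → EuclideanSpace ℝ (Fin d))
    (g : ℕ → Ω → EuclideanSpace ℝ (Fin d))
    (hθ0 : ∀ ω, θ 0 ω = θ0)
    (hθrec : ∀ k ω, θ (k + 1) ω = θ k ω + η • g k ω)
    (hgadapt : ∀ k, Measurable[ℱ (k + 1)] (g k))
    (hgL2 : ∀ k, MemLp (g k) 2 P)
    (hgmean : ∀ k, P[g k | ℱ k] =ᵐ[P] fun ω => J' (θ k ω))
    (hg1 : ∀ k, ∀ᵐ ω ∂P, (P[fun ω' => ‖g k ω'‖ | ℱ k]) ω ≤ D₁)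
    (hg1β : ∀ k, ∀ᵐ ω ∂P, (P[fun ω' => ‖g k ω'‖ ^ (1 + β) | ℱ k]) ω ≤ D1β)
    (hg2 : ∀ k, ∀ᵐ ω ∂P, (P[fun ω' => ‖g k ω'‖ ^ 2 | ℱ k]) ω ≤ D₂) :
    ∀ K : ℕ, 1 ≤ K →
      (1 / (K : ℝ)) * ∑ k ∈ Finset.range K, ∫ ω, ‖J' (θ k ω)‖ ^ 2 ∂P
        ≤ (Jstar - J θ0) / (η * K) + MJ * (η ^ β * D1β + η * D₂ + lam * D₁) := by
  intro K hK
  have hθ : Adapted ℱ θ := adapted_of_eq_add_smul hθ0 hθrec hgadapt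
  have hJ'meas : Measurable J' := measurable_of_hasGradientAt hJdiff
  have hJcont : Continuous J :=
    continuous_iff_continuousAt.2 fun x => (hJdiff x).differentiableAt.continuousAt
  have hJθ : ∀ k, Integrable (fun ω => J (θ k ω)) P := fun k =>
    .of_bound (hJcont.measurable.comp ((hθ k).mono (ℱ.le k) le_rfl)).aestronglyMeasurable Jmax
      (ae_of_all _ fun ω => hJbdd (θ k ω))
  have hstep : ∀ k, ∫ ω, J (θ k ω) ∂P
      + η * (∫ ω, ‖J' (θ k ω)‖ ^ 2 ∂P - MJ * (η ^ β * D1β + η * D₂ + lam * D₁))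
      ≤ ∫ ω, J (θ (k + 1) ω) ∂P := by
    intro k
    have hJθ' := hJθ (k + 1)
    simp only [hθrec] at hJθ' ⊢
    have h1β : ENNReal.ofReal (1 + β) ≤ 2 :=
      (ENNReal.ofReal_le_ofReal (by linarith [hβ.2] : 1 + β ≤ 2)).trans_eq
        (ENNReal.ofReal_ofNat 2)
    exact le_integral_apply_add_smul (ℱ.le k) hMJ hlam hη hsmooth (hJθ k) hJθ'
      (hJ'meas.comp (hθ k)).stronglyMeasurable ((hgL2 k).integrable one_le_two)
      ((hgL2 k).integrable_norm_rpow_of_le_s7 (p := 1 + β) (by linarith [hβ.1]) h1β)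
      (hgL2 k).norm.integrable_sq (hgmean k) (hg1 k) (hg1β k) (hg2 k)
  have hbound : ∀ k, ∫ ω, J (θ k ω) ∂P ≤ Jstar := fun k =>
    (integral_mono (hJθ k) (integrable_const Jstar) fun ω => hJub _).trans_eq (by simp)
  have hinit : ∫ ω, J (θ 0 ω) ∂P = J θ0 := by simp [hθ0]
  simpa [hinit] using mean_le_of_add_mul_sub_le_succ hη hstep hbound hK

/-- Constant-step-size convergence bound of the paper's Theorem 1: for stochastic
gradient ascent `θ_{k+1} = θ_k + η g_k` with unbiased conditional gradients and
conditional moment bounds, for every `K ≥ 1`,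
`(1/K) Σ_{k<K} 𝔼‖∇J(θ_k)‖² ≤ (J*-J(θ₀))/(ηK) + M_J(η^β D_{1+β} + η D₂ + λ D₁)`. -/
theorem stmt7 {Ω : Type*} {m0 : MeasurableSpace Ω} (P : Measure Ω) [IsProbabilityMeasure P]
    (ℱ : Filtration ℕ m0)
    (d : ℕ) (MJ β lam η Jstar D₁ D1β D₂ Jmax : ℝ)
    (hMJ : 0 ≤ MJ) (hβ : β ∈ Set.Ioc (0 : ℝ) 1) (hlam : 0 ≤ lam) (hη : 0 < η)
    (hD₁ : 0 ≤ D₁) (hD1β : 0 ≤ D1β) (hD₂ : 0 ≤ D₂)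
    (J : EuclideanSpace ℝ (Fin d) → ℝ)
    (J' : EuclideanSpace ℝ (Fin d) → EuclideanSpace ℝ (Fin d))
    (hJdiff : ∀ x, HasGradientAt J (J' x) x)
    (hJbdd : ∀ x, |J x| ≤ Jmax)
    (hJub : ∀ x, J x ≤ Jstar)
    (hsmooth : ∀ x y : EuclideanSpace ℝ (Fin d),
      |J x - J y - ⟪J' y, x - y⟫|
        ≤ MJ * (‖x - y‖ ^ (1 + β) + ‖x - y‖ ^ 2 + lam * ‖x - y‖))
    (θ0 : EuclideanSpace ℝ (Fin d))
    (θ : ℕ → Ω → EuclideanSpace ℝ (Fin d))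
    (g : ℕ → Ω → EuclideanSpace ℝ (Fin d))
    (hθ0 : ∀ ω, θ 0 ω = θ0)
    (hθrec : ∀ k ω, θ (k + 1) ω = θ k ω + η • g k ω)
    (hgadapt : ∀ k, Measurable[ℱ (k + 1)] (g k))
    (hgL2 : ∀ k, MemLp (g k) 2 P)
    (hgmean : ∀ k, P[g k | ℱ k] =ᵐ[P] fun ω => J' (θ k ω))
    (hg1 : ∀ k, ∀ᵐ ω ∂P, (P[fun ω' => ‖g k ω'‖ | ℱ k]) ω ≤ D₁)
    (hg1β : ∀ k, ∀ᵐ ω ∂P, (P[fun ω' => ‖g k ω'‖ ^ (1 + β) | ℱ k]) ω ≤ D1β)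
    (hg2 : ∀ k, ∀ᵐ ω ∂P, (P[fun ω' => ‖g k ω'‖ ^ 2 | ℱ k]) ω ≤ D₂) :
    ∀ K : ℕ, 1 ≤ K →
      (1 / (K : ℝ)) * ∑ k ∈ Finset.range K, ∫ ω, ‖J' (θ k ω)‖ ^ 2 ∂P
        ≤ (Jstar - J θ0) / (η * K) + MJ * (η ^ β * D1β + η * D₂ + lam * D₁) :=
  stmt7_general P ℱ d MJ β lam η Jstar D₁ D1β D₂ Jmax hMJ hβ hlam hη J J' hJdiff hJbdd hJub hsmooth
    θ0 θ g hθ0 hθrec hgadapt hgL2 hgmean hg1 hg1β hg2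
end

section
/- Let (Ω, ℙ) be a probability space, d ∈ ℕ, γ ∈ (0,1), U_R ≥ 0, B ≥ 0 and c ∈ [1,2]. Let T : Ω → ℕ be a random variable with ℙ(T = t) = (1 − γ^{1/2})·γ^{t/2} for every t ∈ ℕ. Let (R_t)_{t∈ℕ} be real random variables with |R_t| ≤ U_R almost surely, and let (Z_τ)_{τ∈ℕ} be ℝ^d-valued random vectors with 𝔼[‖Z_τ‖^c] ≤ B^{c/2} for every τ. Assume T is independent of the σ-algebra generated by ((R_t), (Z_τ)). Then 𝔼[ ‖ Σ_{t=0}^{T} γ^{t/2} R_t (Σ_{τ=0}^{t} Z_τ) ‖^c ] ≤ 2·U_R^c·B^{c/2}/(1 − γ^{1/2})⁴. -/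
/-! Write `β = √γ`. Exchanging the order of summation and bounding the geometric tails gives
the pathwise estimate `‖ĝ‖ ≤ U_R (1 - β)⁻¹ ∑_{τ ≤ T} β^τ ‖Z_τ‖`, and Hölder's inequality for the
weights `β^τ`, whose total mass is at most `(1 - β)⁻¹`, bounds its `c`-th power by
`U_R^c (1 - β)^{-(2c-1)} ∑_{τ ≤ T} β^τ ‖Z_τ‖^c`. As the horizon is independent of the trajectory
and `ℙ(τ ≤ T) = β^τ`, the expectation of this sum is at most `∑_τ β^{2τ} B^{c/2} = B^{c/2}/(1 - β²)`,
and `(1 - β)^{-(2c-1)} / (1 - β²) ≤ (1 - β)⁻⁴` because `c ≤ 2`. -/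

open MeasureTheory ProbabilityTheory Finset
open scoped ENNReal

section GeometricWeights

variable {β : ℝ}

lemma sum_range_pow_le_inv_one_sub (hβ0 : 0 ≤ β) (hβ1 : β < 1) (n : ℕ) :
    ∑ τ ∈ range n, β ^ τ ≤ (1 - β)⁻¹ := by
  have h := geom_sum_Ico_le_of_lt_one (m := 0) (n := n) hβ0 hβ1
  rwa [← range_eq_Ico, pow_zero, one_div] at h

lemma sum_range_pow_mul_partialSum_le (hβ0 : 0 ≤ β) (hβ1 : β < 1) {x : ℕ → ℝ}
    (hx : ∀ τ, 0 ≤ x τ) (n : ℕ) :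
    ∑ t ∈ range n, β ^ t * ∑ τ ∈ range (t + 1), x τ
      ≤ (1 - β)⁻¹ * ∑ τ ∈ range n, β ^ τ * x τ := by
  calc ∑ t ∈ range n, β ^ t * ∑ τ ∈ range (t + 1), x τ
      = ∑ τ ∈ range n, (∑ t ∈ Ico τ n, β ^ t) * x τ := by
        simp_rw [mul_sum, sum_mul]
        exact sum_comm' fun t τ => by simp only [mem_range, mem_Ico]; omega
    _ ≤ ∑ τ ∈ range n, β ^ τ / (1 - β) * x τ := by
        gcongr with τ
        · exact hx τ
        · exact geom_sum_Ico_le_of_lt_one hβ0 hβ1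
    _ = (1 - β)⁻¹ * ∑ τ ∈ range n, β ^ τ * x τ := by
        rw [mul_sum]
        exact sum_congr rfl fun τ _ => by ring

lemma rpow_sum_range_pow_mul_le (hβ0 : 0 ≤ β) (hβ1 : β < 1) {c : ℝ} (hc : 1 ≤ c)
    {x : ℕ → ℝ} (hx : ∀ τ, 0 ≤ x τ) (n : ℕ) :
    (∑ τ ∈ range n, β ^ τ * x τ) ^ c
      ≤ (1 - β)⁻¹ ^ (c - 1) * ∑ τ ∈ range n, β ^ τ * x τ ^ c := by
  have hw : ∀ τ, 0 ≤ β ^ τ := fun τ => pow_nonneg hβ0 τ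
  have hW : 0 ≤ ∑ τ ∈ range n, β ^ τ := sum_nonneg fun τ _ => hw τ
  have hS : 0 ≤ ∑ τ ∈ range n, β ^ τ * x τ ^ c :=
    sum_nonneg fun τ _ => mul_nonneg (hw τ) (Real.rpow_nonneg (hx τ) c)
  have holder := Real.inner_le_weight_mul_Lp_of_nonneg (range n) hc (β ^ ·) x hw hx
  calc (∑ τ ∈ range n, β ^ τ * x τ) ^ c
      ≤ ((∑ τ ∈ range n, β ^ τ) ^ (1 - c⁻¹) * (∑ τ ∈ range n, β ^ τ * x τ ^ c) ^ c⁻¹) ^ c :=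
        Real.rpow_le_rpow (sum_nonneg fun τ _ => mul_nonneg (hw τ) (hx τ)) holder (by linarith)
    _ = (∑ τ ∈ range n, β ^ τ) ^ (c - 1) * ∑ τ ∈ range n, β ^ τ * x τ ^ c := by
        have hc0 : c ≠ 0 := by positivity
        rw [Real.mul_rpow (Real.rpow_nonneg hW _) (Real.rpow_nonneg hS _), ← Real.rpow_mul hW,
          ← Real.rpow_mul hS, inv_mul_cancel₀ hc0, Real.rpow_one, sub_mul, one_mul,
          inv_mul_cancel₀ hc0]
    _ ≤ (1 - β)⁻¹ ^ (c - 1) * ∑ τ ∈ range n, β ^ τ * x τ ^ c :=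
        mul_le_mul_of_nonneg_right
          (Real.rpow_le_rpow hW (sum_range_pow_le_inv_one_sub hβ0 hβ1 n) (by linarith)) hS

lemma norm_sum_smul_partialSum_le {E : Type*} [SeminormedAddCommGroup E] [NormedSpace ℝ E]
    (hβ0 : 0 ≤ β) (hβ1 : β < 1) {U : ℝ} {r : ℕ → ℝ} (hr : ∀ t, |r t| ≤ U) (z : ℕ → E)
    (n : ℕ) :
    ‖∑ t ∈ range n, (β ^ t * r t) • ∑ τ ∈ range (t + 1), z τ‖
      ≤ U * (1 - β)⁻¹ * ∑ τ ∈ range n, β ^ τ * ‖z τ‖ := by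
  have hU : 0 ≤ U := (abs_nonneg _).trans (hr 0)
  calc ‖∑ t ∈ range n, (β ^ t * r t) • ∑ τ ∈ range (t + 1), z τ‖
      ≤ ∑ t ∈ range n, U * (β ^ t * ∑ τ ∈ range (t + 1), ‖z τ‖) := by
        refine (norm_sum_le _ _).trans (sum_le_sum fun t _ => ?_)
        rw [norm_smul, Real.norm_eq_abs, abs_mul, abs_of_nonneg (pow_nonneg hβ0 t)]
        calc β ^ t * |r t| * ‖∑ τ ∈ range (t + 1), z τ‖
            ≤ β ^ t * U * ∑ τ ∈ range (t + 1), ‖z τ‖ := by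
              gcongr
              exacts [hr t, norm_sum_le _ _]
          _ = U * (β ^ t * ∑ τ ∈ range (t + 1), ‖z τ‖) := by ring
    _ ≤ U * ((1 - β)⁻¹ * ∑ τ ∈ range n, β ^ τ * ‖z τ‖) := by
        rw [← mul_sum]
        gcongr
        exact sum_range_pow_mul_partialSum_le hβ0 hβ1 (fun τ => norm_nonneg _) n
    _ = U * (1 - β)⁻¹ * ∑ τ ∈ range n, β ^ τ * ‖z τ‖ := by ring

lemma norm_sum_smul_partialSum_rpow_le {E : Type*} [SeminormedAddCommGroup E]
    [NormedSpace ℝ E] (hβ0 : 0 ≤ β) (hβ1 : β < 1) {c : ℝ} (hc : 1 ≤ c) {U : ℝ} {r : ℕ → ℝ}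
    (hr : ∀ t, |r t| ≤ U) (z : ℕ → E) (n : ℕ) :
    ‖∑ t ∈ range n, (β ^ t * r t) • ∑ τ ∈ range (t + 1), z τ‖ ^ c
      ≤ U ^ c * (1 - β)⁻¹ ^ (2 * c - 1) * ∑ τ ∈ range n, β ^ τ * ‖z τ‖ ^ c := by
  have hU : 0 ≤ U := (abs_nonneg _).trans (hr 0)
  have hβ : 0 < (1 - β)⁻¹ := inv_pos.2 (by linarith)
  have hS : 0 ≤ ∑ τ ∈ range n, β ^ τ * ‖z τ‖ := by positivity
  calc ‖∑ t ∈ range n, (β ^ t * r t) • ∑ τ ∈ range (t + 1), z τ‖ ^ c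
      ≤ (U * (1 - β)⁻¹ * ∑ τ ∈ range n, β ^ τ * ‖z τ‖) ^ c :=
        Real.rpow_le_rpow (norm_nonneg _) (norm_sum_smul_partialSum_le hβ0 hβ1 hr z n)
          (by linarith)
    _ = U ^ c * (1 - β)⁻¹ ^ c * (∑ τ ∈ range n, β ^ τ * ‖z τ‖) ^ c := by
        rw [Real.mul_rpow (by positivity) hS, Real.mul_rpow hU hβ.le]
    _ ≤ U ^ c * (1 - β)⁻¹ ^ c * ((1 - β)⁻¹ ^ (c - 1) * ∑ τ ∈ range n, β ^ τ * ‖z τ‖ ^ c) := by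
        gcongr
        exact rpow_sum_range_pow_mul_le hβ0 hβ1 hc (fun τ => norm_nonneg _) n
    _ = U ^ c * (1 - β)⁻¹ ^ (2 * c - 1) * ∑ τ ∈ range n, β ^ τ * ‖z τ‖ ^ c := by
        rw [show 2 * c - 1 = c + (c - 1) by ring, Real.rpow_add hβ]
        ring

lemma inv_one_sub_rpow_mul_inv_one_sub_sq_le (hβ0 : 0 ≤ β) (hβ1 : β < 1) {c : ℝ} (hc : c ≤ 2) :
    (1 - β)⁻¹ ^ (2 * c - 1) * (1 - β ^ 2)⁻¹ ≤ ((1 - β) ^ 4)⁻¹ := by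
  have h1β : 0 < 1 - β := by linarith
  calc (1 - β)⁻¹ ^ (2 * c - 1) * (1 - β ^ 2)⁻¹ ≤ (1 - β)⁻¹ ^ (3 : ℝ) * (1 - β)⁻¹ := by
        refine mul_le_mul ?_ (inv_anti₀ h1β (by nlinarith)) (inv_nonneg.2 (by nlinarith)) (by positivity)
        exact Real.rpow_le_rpow_of_exponent_le ((one_le_inv₀ h1β).2 (by linarith)) (by linarith)
    _ = ((1 - β) ^ 4)⁻¹ := by
        rw [Real.rpow_ofNat, ← pow_succ, inv_pow]

end GeometricWeights

section RandomHorizon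

variable {Ω : Type*} [MeasurableSpace Ω] {P : Measure Ω} {T : Ω → ℕ}

lemma measure_setOf_le_eq_pow_of_geometric [IsProbabilityMeasure P] (hT : Measurable T)
    {β : ℝ} (hβ0 : 0 ≤ β) (hβ1 : β ≤ 1)
    (hTdist : ∀ t : ℕ, P {ω | T ω = t} = ENNReal.ofReal ((1 - β) * β ^ t)) (τ : ℕ) :
    P {ω | τ ≤ T ω} = ENNReal.ofReal (β ^ τ) := by
  have hlt : P (T ⁻¹' ↑(range τ)) = ENNReal.ofReal (1 - β ^ τ) := by
    rw [← sum_measure_preimage_singleton _ fun t _ => hT (measurableSet_singleton t)]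
    simp only [Set.preimage, Set.mem_singleton_iff, hTdist]
    rw [← ENNReal.ofReal_sum_of_nonneg fun t _ => by have := sub_nonneg.2 hβ1; positivity,
      ← mul_sum, mul_neg_geom_sum]
  have hcompl : {ω | τ ≤ T ω} = (T ⁻¹' ↑(range τ))ᶜ := by ext; simp
  have hpow : β ^ τ ≤ 1 := pow_le_one₀ hβ0 hβ1
  rw [hcompl, prob_compl_eq_one_sub (hT (by measurability)), hlt, ← ENNReal.ofReal_one,
    ← ENNReal.ofReal_sub _ (by linarith), sub_sub_cancel]

lemma lintegral_sum_range_succ_eq_tsum_of_indepFun (hT : Measurable T) {X : ℕ → Ω → ℝ≥0∞}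
    (hX : ∀ τ, Measurable (X τ)) (hindep : ∀ τ, T ⟂ᵢ[P] X τ) :
    ∫⁻ ω, ∑ τ ∈ range (T ω + 1), X τ ω ∂P = ∑' τ, P {ω | τ ≤ T ω} * ∫⁻ ω, X τ ω ∂P := by
  let e : ℕ → ℕ → ℝ≥0∞ := fun τ => Set.indicator {n | τ ≤ n} 1
  have hsum : ∀ ω, ∑ τ ∈ range (T ω + 1), X τ ω = ∑' τ, (e τ ∘ T) ω * X τ ω := by
    intro ω
    rw [tsum_eq_sum (s := range (T ω + 1)) fun τ hτ => by simp_all [e]]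
    exact sum_congr rfl fun τ hτ => by simp_all [e]
  have he : ∀ τ, ∫⁻ ω, (e τ ∘ T) ω ∂P = P {ω | τ ≤ T ω} := fun τ => by
    have : e τ ∘ T = (T ⁻¹' Set.Ici τ).indicator 1 := by ext; simp [e, Set.indicator]
    rw [this, lintegral_indicator_one (hT measurableSet_Ici)]
    rfl
  simp_rw [hsum]
  rw [lintegral_tsum (f := fun τ ω => (e τ ∘ T) ω * X τ ω) fun τ =>
    ((measurable_of_countable _).comp hT |>.mul (hX τ)).aemeasurable]
  congr 1 with τ
  rw [← he τ]
  exact lintegral_mul_eq_lintegral_mul_lintegral_of_indepFun ((measurable_of_countable _).comp hT)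
    (hX τ) ((hindep τ).comp (measurable_of_countable _) measurable_id)

lemma indepFun_of_indep_iSup_comap_sup {α E F : Type*} [MeasurableSpace α] [MeasurableSpace E]
    [MeasurableSpace F] {S : Ω → α} {R : ℕ → Ω → E} {Z : ℕ → Ω → F}
    (h : Indep (MeasurableSpace.comap S inferInstance)
      (⨆ t, MeasurableSpace.comap (R t) inferInstance ⊔ MeasurableSpace.comap (Z t) inferInstance)
      P) (τ : ℕ) :
    S ⟂ᵢ[P] Z τ :=
  (IndepFun_iff_Indep _ _ _).2 (indep_of_indep_of_le_right h (le_iSup_of_le τ le_sup_right))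

lemma lintegral_sum_range_succ_le_of_geometric [IsProbabilityMeasure P] (hT : Measurable T)
    {β : ℝ} (hβ0 : 0 ≤ β) (hβ1 : β < 1)
    (hTdist : ∀ t : ℕ, P {ω | T ω = t} = ENNReal.ofReal ((1 - β) * β ^ t))
    {X : ℕ → Ω → ℝ≥0∞} (hX : ∀ τ, Measurable (X τ)) (hindep : ∀ τ, T ⟂ᵢ[P] X τ) {b : ℝ≥0∞}
    (hXb : ∀ τ, ∫⁻ ω, X τ ω ∂P ≤ ENNReal.ofReal (β ^ τ) * b) :
    ∫⁻ ω, ∑ τ ∈ range (T ω + 1), X τ ω ∂P ≤ ENNReal.ofReal (1 - β ^ 2)⁻¹ * b := by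
  have hβ2 : 0 < 1 - β ^ 2 := by nlinarith
  have hterm : ∀ τ, P {ω | τ ≤ T ω} * ∫⁻ ω, X τ ω ∂P ≤ ENNReal.ofReal (β ^ 2) ^ τ * b := by
    intro τ
    calc P {ω | τ ≤ T ω} * ∫⁻ ω, X τ ω ∂P
        ≤ ENNReal.ofReal (β ^ τ) * (ENNReal.ofReal (β ^ τ) * b) := by
          rw [measure_setOf_le_eq_pow_of_geometric hT hβ0 hβ1.le hTdist]
          gcongr
          exact hXb τ
      _ = ENNReal.ofReal (β ^ 2) ^ τ * b := by
          rw [← mul_assoc, ← ENNReal.ofReal_mul (pow_nonneg hβ0 τ), ← pow_add, ← two_mul,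
            pow_mul, ENNReal.ofReal_pow (sq_nonneg β)]
  calc ∫⁻ ω, ∑ τ ∈ range (T ω + 1), X τ ω ∂P
      = ∑' τ, P {ω | τ ≤ T ω} * ∫⁻ ω, X τ ω ∂P :=
        lintegral_sum_range_succ_eq_tsum_of_indepFun hT hX hindep
    _ ≤ ∑' τ, ENNReal.ofReal (β ^ 2) ^ τ * b := ENNReal.tsum_le_tsum hterm
    _ = ENNReal.ofReal (1 - β ^ 2)⁻¹ * b := by
        rw [ENNReal.tsum_mul_right, ENNReal.tsum_geometric, ← ENNReal.ofReal_one,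
          ← ENNReal.ofReal_sub _ (sq_nonneg β), ← ENNReal.ofReal_inv_of_pos hβ2]

end RandomHorizon

theorem stmt9_general {Ω : Type*} [MeasurableSpace Ω] (P : Measure Ω) [IsProbabilityMeasure P]
    (d : ℕ) (γ UR B c : ℝ) (hγ : γ ∈ Set.Ioo (0 : ℝ) 1) (hUR : 0 ≤ UR)
    (hc : c ∈ Set.Icc (1 : ℝ) 2)
    (T : Ω → ℕ) (hT : Measurable T)
    (hTdist : ∀ t : ℕ, P {ω | T ω = t} = ENNReal.ofReal ((1 - Real.sqrt γ) * Real.sqrt γ ^ t))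
    (R : ℕ → Ω → ℝ) (hRb : ∀ t, ∀ᵐ ω ∂P, |R t ω| ≤ UR)
    (Z : ℕ → Ω → EuclideanSpace ℝ (Fin d)) (hZm : ∀ τ, Measurable (Z τ))
    (hZb : ∀ τ, ∫⁻ ω, ENNReal.ofReal (‖Z τ ω‖ ^ c) ∂P ≤ ENNReal.ofReal (B ^ (c / 2)))
    (hindep : Indep (MeasurableSpace.comap T inferInstance)
      (⨆ t : ℕ, (MeasurableSpace.comap (R t) inferInstance ⊔
        MeasurableSpace.comap (Z t) inferInstance)) P) :
    ∫⁻ ω, ENNReal.ofReal (‖∑ t ∈ Finset.range (T ω + 1),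
        (Real.sqrt γ ^ t * R t ω) • ∑ τ ∈ Finset.range (t + 1), Z τ ω‖ ^ c) ∂P
      ≤ ENNReal.ofReal (2 * UR ^ c * B ^ (c / 2) / (1 - Real.sqrt γ) ^ 4) := by
  set β := Real.sqrt γ
  have hβ0 : 0 ≤ β := Real.sqrt_nonneg γ
  have hβ1 : β < 1 := by simpa using Real.sqrt_lt_sqrt hγ.1.le hγ.2
  set K := UR ^ c * (1 - β)⁻¹ ^ (2 * c - 1)
  set X : ℕ → Ω → ℝ≥0∞ := fun τ ω => ENNReal.ofReal (β ^ τ * ‖Z τ ω‖ ^ c)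
  have hpointwise : ∀ᵐ ω ∂P, ENNReal.ofReal (‖∑ t ∈ range (T ω + 1),
      (β ^ t * R t ω) • ∑ τ ∈ range (t + 1), Z τ ω‖ ^ c)
        ≤ ENNReal.ofReal K * ∑ τ ∈ range (T ω + 1), X τ ω := by
    filter_upwards [ae_all_iff.2 hRb] with ω hω
    rw [← ENNReal.ofReal_sum_of_nonneg fun τ _ => by positivity,
      ← ENNReal.ofReal_mul (by positivity)]
    exact ENNReal.ofReal_le_ofReal
      (norm_sum_smul_partialSum_rpow_le hβ0 hβ1 hc.1 hω (Z · ω) (T ω + 1))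
  have hindepX : ∀ τ, T ⟂ᵢ[P] X τ := fun τ =>
    (indepFun_of_indep_iSup_comap_sup hindep τ).comp (φ := id)
      (ψ := fun v => ENNReal.ofReal (β ^ τ * ‖v‖ ^ c)) measurable_id (by fun_prop)
  have hXb : ∀ τ, ∫⁻ ω, X τ ω ∂P ≤ ENNReal.ofReal (β ^ τ) * ENNReal.ofReal (B ^ (c / 2)) := by
    intro τ
    simp_rw [X, ENNReal.ofReal_mul (pow_nonneg hβ0 τ)]
    rw [lintegral_const_mul' _ _ ENNReal.ofReal_ne_top]
    gcongr
    exact hZb τ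
  have hconst : K * (1 - β ^ 2)⁻¹ ≤ 2 * UR ^ c / (1 - β) ^ 4 :=
    calc K * (1 - β ^ 2)⁻¹ = UR ^ c * ((1 - β)⁻¹ ^ (2 * c - 1) * (1 - β ^ 2)⁻¹) := mul_assoc _ _ _
      _ ≤ UR ^ c * ((1 - β) ^ 4)⁻¹ :=
        mul_le_mul_of_nonneg_left (inv_one_sub_rpow_mul_inv_one_sub_sq_le hβ0 hβ1 hc.2)
          (Real.rpow_nonneg hUR c)
      _ ≤ 2 * UR ^ c / (1 - β) ^ 4 := by
        rw [div_eq_mul_inv, mul_assoc]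
        exact le_mul_of_one_le_left (by positivity) one_le_two
  calc _ ≤ ∫⁻ ω, ENNReal.ofReal K * ∑ τ ∈ range (T ω + 1), X τ ω ∂P :=
        lintegral_mono_ae hpointwise
    _ ≤ ENNReal.ofReal K * (ENNReal.ofReal (1 - β ^ 2)⁻¹ * ENNReal.ofReal (B ^ (c / 2))) := by
        rw [lintegral_const_mul' _ _ ENNReal.ofReal_ne_top]
        gcongr
        exact lintegral_sum_range_succ_le_of_geometric hT hβ0 hβ1 hTdist (fun τ => by fun_prop)
          hindepX hXb
    _ ≤ ENNReal.ofReal (2 * UR ^ c / (1 - β) ^ 4) * ENNReal.ofReal (B ^ (c / 2)) := by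
        rw [← mul_assoc, ← ENNReal.ofReal_mul (by positivity)]
        gcongr
    _ = _ := by
        rw [← ENNReal.ofReal_mul (by positivity)]
        ring_nf

/-- Moment bound for the random-horizon policy gradient estimator (from the proof of
the paper's Theorem 1): with bounded rewards `|R_t| ≤ U_R`, score terms satisfying
`𝔼‖Z_τ‖^c ≤ B^{c/2}` for `c ∈ [1,2]`, and geometric horizon `T ~ Geom(1-γ^{1/2})`
independent of the trajectory,
`𝔼‖Σ_{t=0}^{T} γ^{t/2} R_t (Σ_{τ≤t} Z_τ)‖^c ≤ 2 U_R^c B^{c/2}/(1-γ^{1/2})⁴`. -/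
theorem stmt9 {Ω : Type*} [MeasurableSpace Ω] (P : Measure Ω) [IsProbabilityMeasure P]
    (d : ℕ) (γ UR B c : ℝ) (hγ : γ ∈ Set.Ioo (0 : ℝ) 1) (hUR : 0 ≤ UR) (hB : 0 ≤ B)
    (hc : c ∈ Set.Icc (1 : ℝ) 2)
    (T : Ω → ℕ) (hT : Measurable T)
    (hTdist : ∀ t : ℕ, P {ω | T ω = t} = ENNReal.ofReal ((1 - Real.sqrt γ) * Real.sqrt γ ^ t))
    (R : ℕ → Ω → ℝ) (hRm : ∀ t, Measurable (R t)) (hRb : ∀ t, ∀ᵐ ω ∂P, |R t ω| ≤ UR)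
    (Z : ℕ → Ω → EuclideanSpace ℝ (Fin d)) (hZm : ∀ τ, Measurable (Z τ))
    (hZb : ∀ τ, ∫⁻ ω, ENNReal.ofReal (‖Z τ ω‖ ^ c) ∂P ≤ ENNReal.ofReal (B ^ (c / 2)))
    (hindep : Indep (MeasurableSpace.comap T inferInstance)
      (⨆ t : ℕ, (MeasurableSpace.comap (R t) inferInstance ⊔
        MeasurableSpace.comap (Z t) inferInstance)) P) :
    ∫⁻ ω, ENNReal.ofReal (‖∑ t ∈ Finset.range (T ω + 1),
        (Real.sqrt γ ^ t * R t ω) • ∑ τ ∈ Finset.range (t + 1), Z τ ω‖ ^ c) ∂P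
      ≤ ENNReal.ofReal (2 * UR ^ c * B ^ (c / 2) / (1 - Real.sqrt γ) ^ 4) :=
  stmt9_general P d γ UR B c hγ hUR hc T hT hTdist R hRb Z hZm hZb hindep
end

section
/- Let α ∈ [1,2], σ > 0, m ∈ ℝ and R ≥ 0. Define A_α := ∫_ℝ exp(−|x|^α) dx and B_α := ∫_ℝ |x|^{α−1}·exp(−|x|^α/2) dx. Then A_α and B_α are finite and positive, and ∫_{{a ∈ ℝ : |a−m| ≥ R}} (|a−m|^{α−1}/σ^α) · (1/(σ·A_α))·exp(−|a−m|^α/σ^α) da ≤ (B_α/(σ·A_α))·exp(−R^α/(2σ^α)). -/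
/-!
On the tail `|a - m| ≥ R`, write `exp (-t^α) = exp (-t^α/2) · exp (-t^α/2)` with
`t = |a - m|/σ` and bound one factor by its value at `t = R/σ`. What remains is dominated by the
integrand of `B_α` evaluated at `(a - m)/σ`, whose integral over the whole line is `σ · B_α` by
translation and scaling.
-/

open MeasureTheory Set Real

lemma integrable_comp_abs_of_integrableOn_Ioi {E : Type*} [NormedAddCommGroup E] {f : ℝ → E}
    (hf : IntegrableOn f (Ioi 0)) :
    Integrable fun x : ℝ => f |x| := by
  have int_Ioi : IntegrableOn (fun x => f |x|) (Ioi 0) :=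
    hf.congr_fun (fun x hx => by rw [abs_of_pos hx]) measurableSet_Ioi
  have int_Iic : IntegrableOn (fun x => f |x|) (Iic 0) := by
    have hneg : MeasurableEmbedding fun x : ℝ => -x := (Homeomorph.neg ℝ).measurableEmbedding
    rw [← Measure.map_neg_eq_self (volume : Measure ℝ), hneg.integrableOn_map_iff]
    simp_rw [Function.comp_def, abs_neg, neg_preimage, neg_Iic, neg_zero]
    exact (integrableOn_Ici_iff_integrableOn_Ioi).mpr int_Ioi
  simpa only [← integrableOn_univ, ← Iic_union_Ioi (a := (0 : ℝ))] using int_Iic.union int_Ioi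

lemma integrable_abs_rpow_mul_exp_neg_mul_abs_rpow {p s b : ℝ} (hs : -1 < s) (hp : 0 < p)
    (hb : 0 < b) : Integrable fun x : ℝ => |x| ^ s * exp (-b * |x| ^ p) :=
  integrable_comp_abs_of_integrableOn_Ioi (integrableOn_rpow_mul_exp_neg_mul_rpow hs hp hb)

lemma integral_pos_of_nonneg_of_pos_on_Ioi {f : ℝ → ℝ} (hf : Integrable f) (h0 : 0 ≤ f)
    (hpos : ∀ x, 0 < x → 0 < f x) : 0 < ∫ x, f x := by
  rw [integral_pos_iff_support_of_nonneg h0 hf]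
  refine lt_of_lt_of_le ?_ (measure_mono fun x (hx : x ∈ Ioi 0) => (hpos x hx).ne')
  simp

lemma exp_neg_le_exp_neg_half_mul {r t : ℝ} (hrt : r ≤ t) :
    exp (-t) ≤ exp (-r / 2) * exp (-t / 2) := by
  rw [← exp_add, exp_le_exp]
  linarith

lemma integral_comp_sub_div_of_pos {E : Type*} [NormedAddCommGroup E] [NormedSpace ℝ E]
    (g : ℝ → E) (m : ℝ) {σ : ℝ} (hσ : 0 < σ) : ∫ a, g ((a - m) / σ) = σ • ∫ x, g x := by
  rw [integral_sub_right_eq_self (fun a => g (a / σ)) m, Measure.integral_comp_div,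
    abs_of_pos hσ]

lemma abs_rpow_div_mul_exp_neg_eq {σ : ℝ} (hσ : 0 < σ) (α y : ℝ) :
    |y| ^ (α - 1) / σ ^ α * exp (-(|y| ^ α) / σ ^ α)
      = σ⁻¹ * (|y / σ| ^ (α - 1) * exp (-(|y / σ| ^ α))) := by
  rw [abs_div, abs_of_pos hσ, div_rpow (abs_nonneg y) hσ.le, div_rpow (abs_nonneg y) hσ.le,
    rpow_sub_one hσ.ne', neg_div]
  have := rpow_pos_of_pos hσ α
  field_simp

lemma abs_rpow_div_mul_exp_neg_le_of_le {α σ R c y : ℝ} (hα : 0 ≤ α) (hσ : 0 < σ) (hR : 0 ≤ R)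
    (hc : 0 ≤ c) (hRy : R ≤ |y|) :
    |y| ^ (α - 1) / σ ^ α * (c * exp (-(|y| ^ α) / σ ^ α))
      ≤ c * exp (-(R ^ α) / (2 * σ ^ α)) * σ⁻¹
          * (|y / σ| ^ (α - 1) * exp (-(|y / σ| ^ α) / 2)) := by
  have hRσ : (R / σ) ^ α ≤ |y / σ| ^ α := by
    rw [abs_div, abs_of_pos hσ]
    gcongr
  calc |y| ^ (α - 1) / σ ^ α * (c * exp (-(|y| ^ α) / σ ^ α))
      = c * σ⁻¹ * (|y / σ| ^ (α - 1) * exp (-(|y / σ| ^ α))) := by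
        rw [mul_left_comm, abs_rpow_div_mul_exp_neg_eq hσ]; ring
    _ ≤ c * σ⁻¹ * (|y / σ| ^ (α - 1) * (exp (-(R / σ) ^ α / 2) * exp (-(|y / σ| ^ α) / 2))) := by
        gcongr
        exact exp_neg_le_exp_neg_half_mul hRσ
    _ = _ := by
        rw [div_rpow hR hσ.le, neg_div, div_div, neg_div]
        ring_nf

lemma integrable_exp_neg_abs_rpow {α : ℝ} (hα : 0 < α) :
    Integrable fun x : ℝ => exp (-(|x| ^ α)) := by
  simpa using integrable_abs_rpow_mul_exp_neg_mul_abs_rpow (s := 0) (by norm_num) hα one_pos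

lemma integrable_abs_rpow_sub_one_mul_exp_neg_abs_rpow_div_two {α : ℝ} (hα : 0 < α) :
    Integrable fun x : ℝ => |x| ^ (α - 1) * exp (-(|x| ^ α) / 2) := by
  simpa [neg_div, div_eq_inv_mul] using
    integrable_abs_rpow_mul_exp_neg_mul_abs_rpow (s := α - 1) (b := 2⁻¹) (by linarith) hα
      (by norm_num)

lemma integral_exp_neg_abs_rpow_pos {α : ℝ} (hα : 0 < α) : 0 < ∫ x : ℝ, exp (-(|x| ^ α)) :=
  integral_pos_of_nonneg_of_pos_on_Ioi (integrable_exp_neg_abs_rpow hα)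
    (fun _ => (exp_pos _).le) fun _ _ => exp_pos _

lemma integral_abs_rpow_sub_one_mul_exp_neg_abs_rpow_div_two_pos {α : ℝ} (hα : 0 < α) :
    0 < ∫ x : ℝ, |x| ^ (α - 1) * exp (-(|x| ^ α) / 2) :=
  integral_pos_of_nonneg_of_pos_on_Ioi
    (integrable_abs_rpow_sub_one_mul_exp_neg_abs_rpow_div_two hα) (fun _ => by positivity)
    fun _ hx => mul_pos (rpow_pos_of_pos (abs_pos.2 hx.ne') _) (exp_pos _)

/-- Tail estimate for the moderate-tailed policy (exploration tolerance computation):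
with `A_α = ∫ exp(-|x|^α) dx` and `B_α = ∫ |x|^{α-1} exp(-|x|^α/2) dx`, both finite
and positive, the score-mass of the density `(1/(σA_α)) exp(-|a-m|^α/σ^α)` over the
tail `{|a-m| ≥ R}` is at most `(B_α/(σA_α)) exp(-R^α/(2σ^α))`. -/
theorem stmt10 (α : ℝ) (hα : α ∈ Set.Icc (1 : ℝ) 2) (σ : ℝ) (hσ : 0 < σ)
    (m R : ℝ) (hR : 0 ≤ R) (Aα Bα : ℝ)
    (hAα : Aα = ∫ x : ℝ, Real.exp (-(|x| ^ α)))
    (hBα : Bα = ∫ x : ℝ, |x| ^ (α - 1) * Real.exp (-(|x| ^ α) / 2)) :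
    Integrable (fun x : ℝ => Real.exp (-(|x| ^ α))) ∧ 0 < Aα ∧
    Integrable (fun x : ℝ => |x| ^ (α - 1) * Real.exp (-(|x| ^ α) / 2)) ∧ 0 < Bα ∧
    ∫ a in {a : ℝ | R ≤ |a - m|},
        (|a - m| ^ (α - 1) / σ ^ α) * ((1 / (σ * Aα)) * Real.exp (-(|a - m| ^ α) / σ ^ α))
      ≤ (Bα / (σ * Aα)) * Real.exp (-(R ^ α) / (2 * σ ^ α)) := by
  have hα0 : 0 < α := by linarith [hα.1]
  have hA : 0 < Aα := hAα ▸ integral_exp_neg_abs_rpow_pos hα0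
  have hg_int := integrable_abs_rpow_sub_one_mul_exp_neg_abs_rpow_div_two hα0
  refine ⟨integrable_exp_neg_abs_rpow hα0, hA, hg_int, hBα ▸
    integral_abs_rpow_sub_one_mul_exp_neg_abs_rpow_div_two_pos hα0, ?_⟩
  set g : ℝ → ℝ := fun x => |x| ^ (α - 1) * exp (-(|x| ^ α) / 2)
  set K := 1 / (σ * Aα) * exp (-(R ^ α) / (2 * σ ^ α)) * σ⁻¹ with hK
  have hG_int : Integrable fun a => K * g ((a - m) / σ) :=
    ((hg_int.comp_div hσ.ne').comp_sub_right m).const_mul K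
  have hS : MeasurableSet {a : ℝ | R ≤ |a - m|} := measurableSet_le measurable_const (by fun_prop)
  calc ∫ a in {a : ℝ | R ≤ |a - m|},
        (|a - m| ^ (α - 1) / σ ^ α) * ((1 / (σ * Aα)) * exp (-(|a - m| ^ α) / σ ^ α))
      ≤ ∫ a in {a : ℝ | R ≤ |a - m|}, K * g ((a - m) / σ) :=
        integral_mono_of_nonneg (.of_forall fun a => by positivity) hG_int.integrableOn
          (ae_restrict_of_forall_mem hS fun a ha =>
            abs_rpow_div_mul_exp_neg_le_of_le hα0.le hσ hR (by positivity) ha)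
    _ ≤ ∫ a, K * g ((a - m) / σ) :=
        setIntegral_le_integral hG_int (.of_forall fun a => by positivity)
    _ = (Bα / (σ * Aα)) * exp (-(R ^ α) / (2 * σ ^ α)) := by
        rw [integral_const_mul, integral_comp_sub_div_of_pos g m hσ, ← hBα, hK, smul_eq_mul]
        field_simp
end

section
/- Let d ∈ ℕ, β ∈ (0,1], m ≥ 0, b ≥ 0, and let v, θ ∈ ℝ^d satisfy ⟨v, θ⟩ ≥ m·‖θ‖^{1+β} − b. Then ⟨−v, θ⟩·(1 + ‖θ‖²)^{−1/2} ≤ −m·(1 + ‖θ‖²)^{β/2} + m + b. -/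
open scoped RealInnerProductSpace

private lemma aux_rpow_add (a c p : ℝ) (ha : 0 ≤ a) (hc : 0 ≤ c) (hp : 0 ≤ p)
    (hp1 : p ≤ 1) : (a + c) ^ p ≤ a ^ p + c ^ p := by
  have h := NNReal.rpow_add_le_add_rpow a.toNNReal c.toNNReal hp hp1
  have h2 := NNReal.coe_le_coe.mpr h
  simpa [NNReal.coe_rpow, Real.toNNReal_add ha hc, Real.coe_toNNReal a ha,
    Real.coe_toNNReal c hc] using h2

/-- Drift estimate under dissipativity (from the paper's Lévy moment-bound lemma):
if `⟨v,θ⟩ ≥ m‖θ‖^{1+β} - b`, then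
`⟨-v,θ⟩ (1+‖θ‖²)^{-1/2} ≤ -m (1+‖θ‖²)^{β/2} + m + b`. -/
theorem stmt13 (d : ℕ) (β : ℝ) (hβ : β ∈ Set.Ioc (0 : ℝ) 1) (m b : ℝ)
    (hm : 0 ≤ m) (hb : 0 ≤ b)
    (v θ : EuclideanSpace ℝ (Fin d))
    (h : m * ‖θ‖ ^ (1 + β) - b ≤ ⟪v, θ⟫) :
    ⟪-v, θ⟫ * (1 + ‖θ‖ ^ 2) ^ (-(1 : ℝ) / 2)
      ≤ -m * (1 + ‖θ‖ ^ 2) ^ (β / 2) + m + b := by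
  obtain ⟨hβ0, hβ1⟩ := hβ
  set x : ℝ := ‖θ‖ with hxdef
  have hx : 0 ≤ x := norm_nonneg θ
  have hg1 : (1 : ℝ) ≤ 1 + x ^ 2 := by nlinarith
  have hgpos : (0 : ℝ) < 1 + x ^ 2 := by linarith
  set r : ℝ := (1 + x ^ 2) ^ (-(1 : ℝ) / 2) with hrdef
  have hrpos : 0 < r := Real.rpow_pos_of_pos hgpos _
  have hr1 : r ≤ 1 :=
    Real.rpow_le_one_of_one_le_of_nonpos hg1 (by norm_num)
  -- key: (1+x^2)^((1+β)/2) ≤ 1 + x^(1+β)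
  have hkey : (1 + x ^ 2) ^ ((1 + β) / 2) ≤ 1 + x ^ (1 + β) := by
    have h1 := aux_rpow_add 1 (x ^ 2) ((1 + β) / 2) (by norm_num)
      (by positivity) (by linarith) (by linarith)
    have h2 : (x ^ 2 : ℝ) ^ ((1 + β) / 2) = x ^ (1 + β) := by
      rw [← Real.rpow_natCast x 2, ← Real.rpow_mul hx]
      congr 1; ring
    rw [Real.one_rpow, h2] at h1
    exact h1
  -- product identity: (1+x^2)^((1+β)/2) * r = (1+x^2)^(β/2)
  have hprod : (1 + x ^ 2) ^ ((1 + β) / 2) * r = (1 + x ^ 2) ^ (β / 2) := by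
    rw [hrdef, ← Real.rpow_add hgpos]
    ring_nf
  have hinner : ⟪-v, θ⟫ = -⟪v, θ⟫ := by
    simp
  have hstep1 : ⟪-v, θ⟫ ≤ b - m * x ^ (1 + β) := by
    rw [hinner]; linarith
  have hstep2 : ⟪-v, θ⟫ * r ≤ (b - m * x ^ (1 + β)) * r :=
    mul_le_mul_of_nonneg_right hstep1 hrpos.le
  have hbr : b * r ≤ b := by nlinarith
  have hmr : m * r ≤ m := by nlinarith
  -- -m * x^(1+β) * r ≤ -m*(1+x^2)^(β/2) + m
  have hmain : -(m * x ^ (1 + β)) * r ≤ -m * (1 + x ^ 2) ^ (β / 2) + m := by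
    have h3 : m * (1 + x ^ 2) ^ ((1 + β) / 2) ≤ m * (1 + x ^ (1 + β)) :=
      mul_le_mul_of_nonneg_left hkey hm
    have h4 : m * (1 + x ^ 2) ^ ((1 + β) / 2) * r ≤ m * (1 + x ^ (1 + β)) * r :=
      mul_le_mul_of_nonneg_right h3 hrpos.le
    have h5 : m * (1 + x ^ 2) ^ ((1 + β) / 2) * r = m * (1 + x ^ 2) ^ (β / 2) := by
      rw [mul_assoc, hprod]
    nlinarith [hrpos.le]
  calc ⟪-v, θ⟫ * r ≤ (b - m * x ^ (1 + β)) * r := hstep2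
    _ = b * r + -(m * x ^ (1 + β)) * r := by ring
    _ ≤ b + (-m * (1 + x ^ 2) ^ (β / 2) + m) := add_le_add hbr hmain
    _ = -m * (1 + x ^ 2) ^ (β / 2) + m + b := by ring
end

section
/- Let d ∈ ℕ, η > 0, M ≥ 0, B ≥ 0 and β ∈ (0,1]. Let F : ℝ^d → ℝ^d satisfy ‖F(x) − F(y)‖ ≤ M·‖x − y‖^β for all x, y ∈ ℝ^d and ‖F(0)‖ ≤ B. Let θ : [0, η] → ℝ^d be bounded and measurable, and let ℓ : [0, η] → ℝ^d be bounded with ℓ(0) = 0, such that θ(t) = θ(0) + ∫_0^t F(θ(u)) du + ℓ(t) for every t ∈ [0, η]. Then for every t ∈ [0, η], ‖θ(t) − θ(0)‖ ≤ e^{M·η}·( η·(M·‖θ(0)‖^β + B + M) + sup_{s∈[0,η]} ‖ℓ(s)‖ ). -/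
/-!
Hölder continuity with exponent `β ≤ 1` gives the linear growth bound
`‖F(θ u)‖ ≤ M‖θ u - θ 0‖ + (M‖θ 0‖^β + B + M)` (using `a^β ≤ a + 1`), so
`g(t) = ‖θ t - θ 0‖` satisfies the integral inequality `g(t) ≤ A + M ∫₀ᵗ g` with
`A = η(M‖θ 0‖^β + B + M) + sup ‖ℓ‖`. Grönwall's inequality then gives `g(t) ≤ A e^{Mt}`.
-/

open MeasureTheory Set

theorem rpow_le_self_add_one {a β : ℝ} (ha : 0 ≤ a) (hβ0 : 0 ≤ β) (hβ1 : β ≤ 1) :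
    a ^ β ≤ a + 1 := by
  rcases le_total a 1 with h | h
  · linarith [Real.rpow_le_one ha h hβ0]
  · linarith [Real.rpow_le_self_of_one_le h hβ1]

theorem norm_le_of_norm_sub_le_mul_rpow {E F : Type*} [SeminormedAddCommGroup E]
    [SeminormedAddCommGroup F] {f : E → F} {M β : ℝ} (hM : 0 ≤ M) (hβ0 : 0 ≤ β) (hβ1 : β ≤ 1)
    (hf : ∀ x y, ‖f x - f y‖ ≤ M * ‖x - y‖ ^ β) (x₀ x : E) :
    ‖f x‖ ≤ M * ‖x - x₀‖ + (M * ‖x₀‖ ^ β + ‖f 0‖ + M) := by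
  have hx : ‖f x - f x₀‖ ≤ M * (‖x - x₀‖ + 1) :=
    (hf x x₀).trans (mul_le_mul_of_nonneg_left (rpow_le_self_add_one (norm_nonneg _) hβ0 hβ1) hM)
  have hx₀ : ‖f x₀ - f 0‖ ≤ M * ‖x₀‖ ^ β := by simpa using hf x₀ 0
  calc ‖f x‖ = ‖(f x - f x₀) + (f x₀ - f 0) + f 0‖ := by abel_nf
    _ ≤ ‖f x - f x₀‖ + ‖f x₀ - f 0‖ + ‖f 0‖ := norm_add₃_le
    _ ≤ _ := by linarith

theorem intervalIntegrable_of_norm_le {E : Type*} [NormedAddCommGroup E] {f : ℝ → E}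
    {a b C : ℝ} (hab : a ≤ b) (hf : AEStronglyMeasurable f (volume.restrict (Icc a b)))
    (hC : ∀ t ∈ Icc a b, ‖f t‖ ≤ C) : IntervalIntegrable f volume a b :=
  (intervalIntegrable_iff_integrableOn_Icc_of_le hab).2 <|
    Integrable.of_bound hf C ((ae_restrict_iff' measurableSet_Icc).2 (ae_of_all _ hC))

theorem norm_integral_le_mul_integral_add {E : Type*} [NormedAddCommGroup E] [NormedSpace ℝ E]
    {f : ℝ → E} {g : ℝ → ℝ} {M C a b : ℝ} (hab : a ≤ b) (hg : IntervalIntegrable g volume a b)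
    (hfg : ∀ u ∈ Icc a b, ‖f u‖ ≤ M * g u + C) :
    ‖∫ u in a..b, f u‖ ≤ M * (∫ u in a..b, g u) + (b - a) * C := by
  have hbound : IntervalIntegrable (fun u => M * g u + C) volume a b :=
    (hg.const_mul M).add intervalIntegrable_const
  calc ‖∫ u in a..b, f u‖ ≤ ∫ u in a..b, (M * g u + C) :=
        intervalIntegral.norm_integral_le_of_norm_le hab
          (ae_of_all _ fun u hu => hfg u (Ioc_subset_Icc_self hu)) hbound
    _ = M * (∫ u in a..b, g u) + (b - a) * C := by
        rw [intervalIntegral.integral_add (hg.const_mul M) intervalIntegrable_const,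
          intervalIntegral.integral_const_mul, intervalIntegral.integral_const, smul_eq_mul]

theorem le_mul_exp_of_le_add_mul_integral {g : ℝ → ℝ} {A M a b : ℝ} (hM : 0 ≤ M)
    (hg : IntervalIntegrable g volume a b)
    (h : ∀ t ∈ Icc a b, g t ≤ A + M * ∫ u in a..t, g u) :
    ∀ t ∈ Icc a b, g t ≤ A * Real.exp (M * (t - a)) := by
  intro t ht
  have hab : a ≤ b := ht.1.trans ht.2
  -- Extending `g` by zero makes its primitive continuous on all of `ℝ`.
  set G := (Icc a b).indicator g
  have hG : Integrable G := (integrable_indicator_iff measurableSet_Icc).2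
    ((intervalIntegrable_iff_integrableOn_Icc_of_le hab).1 hg)
  have hGg : ∀ s ∈ Icc a b, ∫ u in a..s, G u = ∫ u in a..s, g u := fun s hs =>
    intervalIntegral.integral_congr fun u hu =>
      indicator_of_mem (Icc_subset_Icc_right hs.2 (by rwa [uIcc_of_le hs.1] at hu)) g
  set Φ := fun s => A + M * ∫ u in a..s, G u
  have hΦ : Continuous Φ := continuous_const.add <| continuous_const.mul <|
    intervalIntegral.continuous_primitive (fun _ _ => hG.intervalIntegrable) a
  have hgΦ : ∀ s ∈ Icc a b, g s ≤ Φ s := fun s hs => by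
    simpa only [Φ, hGg s hs] using h s hs
  -- `Φ` is continuous but need not be differentiable; integrating once more gives a `C¹`
  -- function `Y ≥ Φ` with `Y' = M Φ ≤ M Y`, to which the differential Grönwall bound applies.
  set Y := fun s => A + M * ∫ u in a..s, Φ u
  have hY : ∀ s, HasDerivAt Y (M * Φ s) s := fun s =>
    ((hΦ.integral_hasStrictDerivAt a s).hasDerivAt.const_mul M).const_add A
  have hΦY : ∀ s ∈ Icc a b, Φ s ≤ Y s := fun s hs => by
    refine add_le_add_right (mul_le_mul_of_nonneg_left ?_ hM) A
    refine intervalIntegral.integral_mono_on hs.1 hG.intervalIntegrable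
      (hΦ.intervalIntegrable _ _) fun u hu => ?_
    have hu' : u ∈ Icc a b := ⟨hu.1, hu.2.trans hs.2⟩
    simpa only [G, indicator_of_mem hu'] using hgΦ u hu'
  have hYa : Y a ≤ A := by simp [Y]
  have hY' : ∀ s ∈ Ico a b, M * Φ s ≤ M * Y s + 0 := fun s hs => by
    simpa using mul_le_mul_of_nonneg_left (hΦY s (Ico_subset_Icc_self hs)) hM
  have hYgron := le_gronwallBound_of_liminf_deriv_right_le
    (fun s _ => (hY s).continuousAt.continuousWithinAt)
    (fun s _ _ hr => (hY s).hasDerivWithinAt.liminf_right_slope_le hr) hYa hY' t ht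
  rw [gronwallBound_ε0] at hYgron
  exact (hgΦ t ht).trans ((hΦY t ht).trans hYgron)

theorem norm_sub_le_exp_of_eq_add_integral {E : Type*} [NormedAddCommGroup E]
    [NormedSpace ℝ E] {x f ℓ : ℝ → E} {M C L η : ℝ} (hM : 0 ≤ M) (hC : 0 ≤ C)
    (hx : IntervalIntegrable (fun u => ‖x u - x 0‖) volume 0 η)
    (hf : ∀ u ∈ Icc 0 η, ‖f u‖ ≤ M * ‖x u - x 0‖ + C) (hℓ : ∀ s ∈ Icc 0 η, ‖ℓ s‖ ≤ L)
    (heq : ∀ s ∈ Icc 0 η, x s = x 0 + (∫ u in 0..s, f u) + ℓ s) :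
    ∀ t ∈ Icc 0 η, ‖x t - x 0‖ ≤ Real.exp (M * η) * (η * C + L) := by
  intro t ht
  have hη : 0 ≤ η := ht.1.trans ht.2
  have hL : 0 ≤ L := (norm_nonneg _).trans (hℓ 0 ⟨le_rfl, hη⟩)
  have key : ∀ s ∈ Icc 0 η, ‖x s - x 0‖ ≤ (η * C + L) + M * ∫ u in 0..s, ‖x u - x 0‖ := by
    intro s hs
    have hintegral := norm_integral_le_mul_integral_add hs.1
      (hx.mono_set (uIcc_subset_uIcc_left (by simpa [uIcc_of_le hη] using hs)))
      fun u hu => hf u ⟨hu.1, hu.2.trans hs.2⟩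
    have hsC : (s - 0) * C ≤ η * C := mul_le_mul_of_nonneg_right (by linarith [hs.2]) hC
    calc ‖x s - x 0‖ = ‖(∫ u in 0..s, f u) + ℓ s‖ := by rw [heq s hs]; abel_nf
      _ ≤ ‖∫ u in 0..s, f u‖ + ‖ℓ s‖ := norm_add_le _ _
      _ ≤ (η * C + L) + M * ∫ u in 0..s, ‖x u - x 0‖ := by linarith [hℓ s hs]
  calc ‖x t - x 0‖ ≤ (η * C + L) * Real.exp (M * (t - 0)) :=
        le_mul_exp_of_le_add_mul_integral hM hx key t ht
    _ ≤ Real.exp (M * η) * (η * C + L) := by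
        rw [sub_zero, mul_comm]
        gcongr
        exact ht.2

theorem stmt15_general (d : ℕ) (η M B β : ℝ) (hM : 0 ≤ M)
    (hβ : β ∈ Set.Ioc (0 : ℝ) 1)
    (F : EuclideanSpace ℝ (Fin d) → EuclideanSpace ℝ (Fin d))
    (hF : ∀ x y, ‖F x - F y‖ ≤ M * ‖x - y‖ ^ β) (hF0 : ‖F 0‖ ≤ B)
    (θ : ℝ → EuclideanSpace ℝ (Fin d))
    (hθm : AEStronglyMeasurable θ (volume.restrict (Set.Icc (0 : ℝ) η)))
    (hθb : ∃ Cθ, ∀ t ∈ Set.Icc (0 : ℝ) η, ‖θ t‖ ≤ Cθ)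
    (ℓ : ℝ → EuclideanSpace ℝ (Fin d))
    (hℓb : ∃ Cℓ, ∀ s ∈ Set.Icc (0 : ℝ) η, ‖ℓ s‖ ≤ Cℓ)
    (hint : ∀ t ∈ Set.Icc (0 : ℝ) η, θ t = θ 0 + (∫ u in (0 : ℝ)..t, F (θ u)) + ℓ t) :
    ∀ t ∈ Set.Icc (0 : ℝ) η,
      ‖θ t - θ 0‖ ≤ Real.exp (M * η) *
        (η * (M * ‖θ 0‖ ^ β + B + M) + ⨆ s : Set.Icc (0 : ℝ) η, ‖ℓ (s : ℝ)‖) := by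
  obtain ⟨Cθ, hCθ⟩ := hθb
  obtain ⟨Cℓ, hCℓ⟩ := hℓb
  intro t ht
  have hF_growth : ∀ u, ‖F (θ u)‖ ≤ M * ‖θ u - θ 0‖ + (M * ‖θ 0‖ ^ β + B + M) := fun u => by
    linarith [norm_le_of_norm_sub_le_mul_rpow hM hβ.1.le hβ.2 hF (θ 0) (θ u)]
  have hℓ_sup : ∀ s ∈ Icc 0 η, ‖ℓ s‖ ≤ ⨆ s : Icc (0 : ℝ) η, ‖ℓ (s : ℝ)‖ := fun s hs =>
    le_ciSup (f := fun s : Icc (0 : ℝ) η => ‖ℓ s‖) ⟨Cℓ, by rintro _ ⟨s, rfl⟩; exact hCℓ s s.2⟩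
      ⟨s, hs⟩
  have hθ_int : IntervalIntegrable (fun u => ‖θ u - θ 0‖) volume 0 η :=
    intervalIntegrable_of_norm_le (ht.1.trans ht.2) (hθm.sub aestronglyMeasurable_const).norm
      fun u hu => by simpa using norm_sub_le_of_le (hCθ u hu) le_rfl
  exact norm_sub_le_exp_of_eq_add_integral hM (by have := (norm_nonneg _).trans hF0; positivity)
    hθ_int (fun u _ => hF_growth u) hℓ_sup hint t ht

/-- Pathwise Gronwall estimate for the Lévy-driven dynamics (deviation over one step
interval): if `θ(t) = θ(0) + ∫₀ᵗ F(θ(u)) du + ℓ(t)` on `[0,η]` with `F` `(M,β)`-Hölder,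
`‖F(0)‖ ≤ B`, `θ` bounded measurable and `ℓ` bounded with `ℓ(0)=0`, then for `t ∈ [0,η]`,
`‖θ(t)-θ(0)‖ ≤ e^{Mη}(η(M‖θ(0)‖^β + B + M) + sup_{s∈[0,η]}‖ℓ(s)‖)`. -/
theorem stmt15 (d : ℕ) (η M B β : ℝ) (hη : 0 < η) (hM : 0 ≤ M) (hB : 0 ≤ B)
    (hβ : β ∈ Set.Ioc (0 : ℝ) 1)
    (F : EuclideanSpace ℝ (Fin d) → EuclideanSpace ℝ (Fin d))
    (hF : ∀ x y, ‖F x - F y‖ ≤ M * ‖x - y‖ ^ β) (hF0 : ‖F 0‖ ≤ B)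
    (θ : ℝ → EuclideanSpace ℝ (Fin d))
    (hθm : AEStronglyMeasurable θ (volume.restrict (Set.Icc (0 : ℝ) η)))
    (hθb : ∃ Cθ, ∀ t ∈ Set.Icc (0 : ℝ) η, ‖θ t‖ ≤ Cθ)
    (ℓ : ℝ → EuclideanSpace ℝ (Fin d))
    (hℓb : ∃ Cℓ, ∀ s ∈ Set.Icc (0 : ℝ) η, ‖ℓ s‖ ≤ Cℓ)
    (hℓ0 : ℓ 0 = 0)
    (hint : ∀ t ∈ Set.Icc (0 : ℝ) η, θ t = θ 0 + (∫ u in (0 : ℝ)..t, F (θ u)) + ℓ t) :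
    ∀ t ∈ Set.Icc (0 : ℝ) η,
      ‖θ t - θ 0‖ ≤ Real.exp (M * η) *
        (η * (M * ‖θ 0‖ ^ β + B + M) + ⨆ s : Set.Icc (0 : ℝ) η, ‖ℓ (s : ℝ)‖) :=
  stmt15_general d η M B β hM hβ F hF hF0 θ hθm hθb ℓ hℓb hint
end
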